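/- arXiv:1304.7378 — 5 statements merged into one kernel-verified Lean document; each statement's English description precedes it below -/
import Mathlib

section
/- For every n ≥ 2, the braid group Br_n (defined by the Artin presentation) is isomorphic to the group defined by the presentation with two generators σ₁ and σ and relations: σ₁σⁱσ₁σ⁻ⁱ = σⁱσ₁σ⁻ⁱσ₁ for all integers i with 2 ≤ i ≤ n/2, and σⁿ = (σσ₁)ⁿ⁻¹; an isomorphism is given by sending σ₁ to the Artin generator σ₁ and σ to the product σ₁σ₂⋯σₙ₋₁. -/
/-!
STATEMENT 0: For every n ≥ 2, the braid group `Br_n` (Artin presentation) is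
isomorphic to the group presented by two generators σ₁, σ with relations
σ₁σⁱσ₁σ⁻ⁱ = σⁱσ₁σ⁻ⁱσ₁ (2 ≤ i ≤ n/2) and σⁿ = (σσ₁)ⁿ⁻¹, via σ₁ ↦ σ₁,
σ ↦ σ₁σ₂⋯σₙ₋₁.
-/

open FreeGroup

/-- The Artin relations for the braid group `Br_n`, on generators
`σ₁, …, σ_{n-1}` (encoded as `Fin (n-1)`, `i` standing for `σ_{i+1}`). -/
def braidRels (n : ℕ) : Set (FreeGroup (Fin (n - 1))) :=
  {r | (∃ i j : Fin (n - 1), (i.val + 1 < j.val ∨ j.val + 1 < i.val) ∧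
          r = of i * of j * (of j * of i)⁻¹) ∨
       (∃ i j : Fin (n - 1), j.val = i.val + 1 ∧
          r = of i * of j * of i * (of j * of i * of j)⁻¹)}

/-- The braid group `Br_n`, via the Artin presentation. -/
def BraidGroup (n : ℕ) : Type := PresentedGroup (braidRels n)

noncomputable instance (n : ℕ) : Group (BraidGroup n) :=
  inferInstanceAs (Group (PresentedGroup (braidRels n)))

/-- The Artin generator `σ_{i+1}` of `Br_n`. -/
def braidGen (n : ℕ) (i : Fin (n - 1)) : BraidGroup n := PresentedGroup.of i

/-- The two generators of the small presentation: `s1` stands for σ₁ and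
`s` for σ. -/
inductive TwoGen : Type
  | s1 : TwoGen
  | s : TwoGen

open TwoGen in
/-- The relations of the two-generator presentation:
`σ₁σⁱσ₁σ⁻ⁱ = σⁱσ₁σ⁻ⁱσ₁` for `2 ≤ i ≤ n/2`, and `σⁿ = (σσ₁)ⁿ⁻¹`. -/
def twoGenRels (n : ℕ) : Set (FreeGroup TwoGen) :=
  {r | (∃ i : ℕ, 2 ≤ i ∧ 2 * i ≤ n ∧
          r = (of s1 * (of s) ^ i * of s1 * ((of s) ^ i)⁻¹) *
              ((of s) ^ i * of s1 * ((of s) ^ i)⁻¹ * of s1)⁻¹) ∨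
       r = (of s) ^ n * (((of s) * of s1) ^ (n - 1))⁻¹}

/-!
In `Br_n`, the far-commutation and braid relations say exactly that conjugation by
`σ = σ₁σ₂⋯σₙ₋₁` sends `σᵢ` to `σᵢ₊₁`, so `σᵢ₊₁ = σⁱσ₁σ⁻ⁱ`. The first relation of the small
presentation then says that `σ₁` and `σᵢ₊₁` commute. In any group, `cᵐ⁺¹ = (ca)ᵐ` is equivalent
to `c = ∏_{j<m} cʲac⁻ʲ`; with `c = σ`, `a = σ₁` this turns `σⁿ = (σσ₁)ⁿ⁻¹` into
`σ = σ₁σ₂⋯σₙ₋₁`.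

Conversely, in the two-generator group put `τₖ = σᵏσ₁σ⁻ᵏ`. The relation `σⁿ = (σσ₁)ⁿ⁻¹` gives
`σ = τ₀τ₁⋯τₙ₋₂` and makes `σⁿ` commute with `σ₁`, so `τₖ` is `n`-periodic in `k`. Then `τₚ`
and `τ_q` commute for `2 ≤ q - p ≤ n - 2`, being conjugate to `σ₁` and `τ_d` with
`d = q - p` or `d = n - (q - p)`, whichever is at most `n / 2`; and the braid relation for
`τᵢ, τᵢ₊₁` follows from `στᵢσ⁻¹ = τᵢ₊₁` by the same computation as above, read backwards.
So `σᵢ₊₁ ↦ τᵢ` is an inverse homomorphism.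
-/

section GroupIdentities

variable {G : Type*} [Group G]

lemma mul_pow_mul_eq_mul_prod_conj_mul_pow (c a : G) (m : ℕ) :
    (c * a) ^ m * c = c * ((List.range m).map fun j => c ^ j * a * (c ^ j)⁻¹).prod * c ^ m := by
  induction m with
  | zero => simp
  | succ m ih =>
    calc (c * a) ^ (m + 1) * c = (c * a) ^ m * c * (a * c) := by simp only [pow_succ, mul_assoc]
      _ = _ := by
        rw [ih, List.range_succ, List.map_append, List.prod_append]
        simp only [List.map_cons, List.map_nil, List.prod_cons, List.prod_nil]
        group

lemma pow_succ_eq_mul_pow_iff (c a : G) (m : ℕ) :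
    c ^ (m + 1) = (c * a) ^ m ↔ ((List.range m).map fun j => c ^ j * a * (c ^ j)⁻¹).prod = c := by
  rw [← mul_left_inj c, mul_pow_mul_eq_mul_prod_conj_mul_pow, eq_comm (b := c),
    show c ^ (m + 1) * c = c * c * c ^ m by group, mul_left_inj, mul_right_inj]

lemma prod_range_mul_eq_mul_prod_range_iff {a : ℕ → G} {m i : ℕ} (hi : i + 1 < m)
    (hcomm : ∀ p q, p + 2 ≤ q → q < m → Commute (a p) (a q)) :
    ((List.range m).map a).prod * a i = a (i + 1) * ((List.range m).map a).prod ↔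
      a i * a (i + 1) * a i = a (i + 1) * a i * a (i + 1) := by
  obtain ⟨k, rfl⟩ : ∃ k, m = i + 2 + k := ⟨m - (i + 2), by omega⟩
  set A := ((List.range' 0 i).map a).prod
  set T := ((List.range' (i + 2) k).map a).prod
  have hsplit : ((List.range (i + 2 + k)).map a).prod = A * (a i * a (i + 1)) * T := by
    rw [List.range_eq_range', ← List.range'_append, ← List.range'_append]
    simp [List.prod_append, List.range'_succ, mul_assoc, A, T]
  have hT : Commute (a i) T := Commute.list_prod_right _ _ fun x hx => by
    obtain ⟨q, hq, rfl⟩ := List.mem_map.mp hx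
    rw [List.mem_range'_1] at hq
    exact hcomm _ _ (by omega) (by omega)
  have hA : Commute (a (i + 1)) A := Commute.list_prod_right _ _ fun x hx => by
    obtain ⟨p, hp, rfl⟩ := List.mem_map.mp hx
    rw [List.mem_range'_1] at hp
    exact (hcomm _ _ (by omega) (by omega)).symm
  have hleft : A * (a i * a (i + 1)) * T * a i = A * (a i * a (i + 1) * a i) * T := by
    rw [mul_assoc _ T, ← hT.eq]; group
  have hright :
      a (i + 1) * (A * (a i * a (i + 1)) * T) = A * (a (i + 1) * a i * a (i + 1)) * T := by
    rw [← mul_assoc, ← mul_assoc, hA.eq]; group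
  rw [hsplit, hleft, hright, mul_left_inj, mul_right_inj]

lemma pow_mul_mul_inv_pow_eq_of_conj_eq_succ {a : ℕ → G} {c : G} {m : ℕ}
    (hc : ∀ i, i + 1 < m → c * a i * c⁻¹ = a (i + 1)) {k : ℕ} (hk : k < m) :
    c ^ k * a 0 * (c ^ k)⁻¹ = a k := by
  induction k with
  | zero => simp
  | succ k ih =>
    rw [← hc k hk, ← ih (by omega)]
    group

end GroupIdentities

namespace BraidGroup

variable (n : ℕ)

/-- `σ_{i+1}` as a function of `i : ℕ`, with junk value `1` for `i ≥ n - 1`. -/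
noncomputable def artinGen (i : ℕ) : BraidGroup n :=
  if h : i < n - 1 then braidGen n ⟨i, h⟩ else 1

lemma artinGen_of_lt {i : ℕ} (h : i < n - 1) : artinGen n i = braidGen n ⟨i, h⟩ := dif_pos h

variable {n}

lemma artinGen_commute {p q : ℕ} (hpq : p + 2 ≤ q) (hq : q < n - 1) :
    Commute (artinGen n p) (artinGen n q) := by
  rw [artinGen_of_lt n (by omega), artinGen_of_lt n hq]
  have h := PresentedGroup.mk_eq_mk_of_mul_inv_mem (rels := braidRels n)
    (Or.inl ⟨⟨p, by omega⟩, ⟨q, hq⟩, Or.inl hpq, rfl⟩)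
  simp only [_root_.map_mul] at h
  exact h

lemma artinGen_braid {i : ℕ} (hi : i + 1 < n - 1) :
    artinGen n i * artinGen n (i + 1) * artinGen n i =
      artinGen n (i + 1) * artinGen n i * artinGen n (i + 1) := by
  rw [artinGen_of_lt n (by omega), artinGen_of_lt n hi]
  have h := PresentedGroup.mk_eq_mk_of_mul_inv_mem (rels := braidRels n)
    (Or.inr ⟨⟨i, by omega⟩, ⟨i + 1, hi⟩, rfl, rfl⟩)
  simp only [_root_.map_mul] at h
  exact h

variable (n) in
noncomputable def sigma : BraidGroup n := ((List.range (n - 1)).map (artinGen n)).prod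

lemma ofFn_braidGen_prod :
    (List.ofFn fun i : Fin (n - 1) => braidGen n i).prod = sigma n := by
  refine congrArg List.prod (List.ext_getElem (by simp) fun i h _ => ?_)
  simp [artinGen_of_lt n (List.length_ofFn ▸ h)]

lemma sigma_mul_artinGen_mul_inv {i : ℕ} (hi : i + 1 < n - 1) :
    sigma n * artinGen n i * (sigma n)⁻¹ = artinGen n (i + 1) := by
  rw [mul_inv_eq_iff_eq_mul, sigma]
  exact (prod_range_mul_eq_mul_prod_range_iff hi fun _ _ hpq hq => artinGen_commute hpq hq).mpr
    (artinGen_braid hi)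

lemma sigma_pow_mul_artinGen_zero {k : ℕ} (hk : k < n - 1) :
    sigma n ^ k * artinGen n 0 * (sigma n ^ k)⁻¹ = artinGen n k :=
  pow_mul_mul_inv_pow_eq_of_conj_eq_succ (fun _ => sigma_mul_artinGen_mul_inv) hk

lemma sigma_pow (hn : n ≠ 0) : sigma n ^ n = (sigma n * artinGen n 0) ^ (n - 1) := by
  obtain ⟨m, rfl⟩ := Nat.exists_eq_succ_of_ne_zero hn
  refine (pow_succ_eq_mul_pow_iff _ _ m).mpr ?_
  rw [sigma, Nat.succ_sub_one]
  exact congrArg List.prod (List.map_congr_left fun k hk =>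
    sigma_pow_mul_artinGen_zero (List.mem_range.mp hk))

end BraidGroup

namespace TwoGen

variable (n : ℕ)

/-- The image of the Artin generator `σ_{k+1}`. -/
noncomputable def artinGen (k : ℕ) : PresentedGroup (twoGenRels n) :=
  PresentedGroup.of s ^ k * PresentedGroup.of s1 * (PresentedGroup.of s ^ k)⁻¹

variable {n}

lemma artinGen_zero : artinGen n 0 = PresentedGroup.of s1 := by
  simp [artinGen]

lemma commute_of_s1_artinGen {i : ℕ} (h2i : 2 ≤ i) (hin : 2 * i ≤ n) :
    Commute (PresentedGroup.of s1) (artinGen n i) := by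
  have h := PresentedGroup.mk_eq_mk_of_mul_inv_mem (rels := twoGenRels n)
    (Or.inl ⟨i, h2i, hin, rfl⟩)
  simp only [_root_.map_mul, _root_.map_inv, _root_.map_pow] at h
  simp only [Commute, SemiconjBy, artinGen, ← mul_assoc]
  exact h

lemma of_s_pow_eq_mul_pow : (PresentedGroup.of s : PresentedGroup (twoGenRels n)) ^ n =
    (PresentedGroup.of s * PresentedGroup.of s1) ^ (n - 1) := by
  have h := PresentedGroup.mk_eq_mk_of_mul_inv_mem (rels := twoGenRels n) (Or.inr rfl)
  simp only [_root_.map_mul, _root_.map_pow] at h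
  exact h

lemma prod_artinGen (hn : n ≠ 0) :
    ((List.range (n - 1)).map (artinGen n)).prod = PresentedGroup.of s := by
  obtain ⟨m, rfl⟩ := Nat.exists_eq_succ_of_ne_zero hn
  exact (pow_succ_eq_mul_pow_iff _ _ m).mp of_s_pow_eq_mul_pow

/-- `σⁿ` commutes with `σ`, and with `σσ₁` because `σⁿ = (σσ₁)ⁿ⁻¹`. -/
lemma commute_of_s_pow_of_s1 :
    Commute ((PresentedGroup.of s : PresentedGroup (twoGenRels n)) ^ n) (PresentedGroup.of s1) := by
  have hs : Commute ((PresentedGroup.of s : PresentedGroup (twoGenRels n)) ^ n)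
      (PresentedGroup.of s) := Commute.pow_left (Commute.refl _) n
  have hss1 : Commute ((PresentedGroup.of s : PresentedGroup (twoGenRels n)) ^ n)
      (PresentedGroup.of s * PresentedGroup.of s1) := by
    rw [of_s_pow_eq_mul_pow]; exact Commute.pow_left (Commute.refl _) _
  simpa using hs.inv_right.mul_right hss1

lemma artinGen_add_self (k : ℕ) : artinGen n (k + n) = artinGen n k := by
  simp only [artinGen, pow_add, mul_assoc, commute_of_s_pow_of_s1.eq]
  group

lemma of_s_pow_mul_artinGen (k i : ℕ) :
    PresentedGroup.of s ^ k * artinGen n i * (PresentedGroup.of s ^ k)⁻¹ = artinGen n (k + i) := by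
  simp only [artinGen]
  group

lemma artinGen_commute_add {k i : ℕ} (h2i : 2 ≤ i) (hin : 2 * i ≤ n) :
    Commute (artinGen n k) (artinGen n (k + i)) := by
  rw [← of_s_pow_mul_artinGen k i, artinGen]
  exact (commute_of_s1_artinGen h2i hin).conj _

/-- The relations only cover distances `i ≤ n / 2`; larger distances `q - p` are reduced to
`n - (q - p)` using the periodicity `artinGen_add_self`. -/
lemma artinGen_commute {p q : ℕ} (hpq : p + 2 ≤ q) (hq : q < n - 1) :
    Commute (artinGen n p) (artinGen n q) := by
  by_cases hd : 2 * (q - p) ≤ n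
  · simpa [Nat.add_sub_cancel' (by omega : p ≤ q)] using
      artinGen_commute_add (k := p) (by omega : 2 ≤ q - p) hd
  · have h := artinGen_commute_add (n := n) (k := q) (i := n - (q - p)) (by omega) (by omega)
    rw [show q + (n - (q - p)) = p + n by omega, artinGen_add_self] at h
    exact h.symm

lemma artinGen_braid {i : ℕ} (hi : i + 1 < n - 1) :
    artinGen n i * artinGen n (i + 1) * artinGen n i =
      artinGen n (i + 1) * artinGen n i * artinGen n (i + 1) := by
  refine (prod_range_mul_eq_mul_prod_range_iff hi fun _ _ hpq hq => artinGen_commute hpq hq).mp ?_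
  rw [prod_artinGen (by omega), ← mul_inv_eq_iff_eq_mul, ← pow_one (PresentedGroup.of s),
    of_s_pow_mul_artinGen, add_comm]

end TwoGen

section Isomorphism

variable {n : ℕ}

variable (n) in
noncomputable def twoGenImage : TwoGen → BraidGroup n
  | .s1 => BraidGroup.artinGen n 0
  | .s => BraidGroup.sigma n

lemma lift_twoGenImage_eq_one (hn : n ≠ 0) :
    ∀ r ∈ twoGenRels n, FreeGroup.lift (twoGenImage n) r = 1 := by
  rintro r (⟨i, h2i, hin, rfl⟩ | rfl) <;>
    simp only [_root_.map_mul, _root_.map_inv, _root_.map_pow, FreeGroup.lift_apply_of,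
      mul_inv_eq_one, twoGenImage]
  · have h := (BraidGroup.artinGen_commute (n := n) (p := 0) (by omega) (by omega)).eq
    rw [← BraidGroup.sigma_pow_mul_artinGen_zero (by omega : i < n - 1)] at h
    simpa only [mul_assoc] using h
  · exact BraidGroup.sigma_pow hn

lemma lift_twoGen_artinGen_eq_one :
    ∀ r ∈ braidRels n, FreeGroup.lift (fun i : Fin (n - 1) => TwoGen.artinGen n i) r = 1 := by
  rintro r (⟨i, j, hij | hij, rfl⟩ | ⟨i, j, hij, rfl⟩) <;>
    simp only [_root_.map_mul, _root_.map_inv, FreeGroup.lift_apply_of, mul_inv_eq_one]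
  · exact TwoGen.artinGen_commute hij j.isLt
  · exact (TwoGen.artinGen_commute hij i.isLt).symm
  · rw [hij]
    exact TwoGen.artinGen_braid (hij ▸ j.isLt)

noncomputable def twoGenToBraid (hn : n ≠ 0) : PresentedGroup (twoGenRels n) →* BraidGroup n :=
  PresentedGroup.toGroup (lift_twoGenImage_eq_one hn)

noncomputable def braidToTwoGen : BraidGroup n →* PresentedGroup (twoGenRels n) :=
  PresentedGroup.toGroup lift_twoGen_artinGen_eq_one

lemma twoGenToBraid_of (hn : n ≠ 0) (x : TwoGen) :
    twoGenToBraid hn (PresentedGroup.of x) = twoGenImage n x :=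
  PresentedGroup.toGroup.of _

lemma braidToTwoGen_braidGen (i : Fin (n - 1)) :
    braidToTwoGen (braidGen n i) = TwoGen.artinGen n i :=
  PresentedGroup.toGroup.of _

lemma braidToTwoGen_artinGen {i : ℕ} (hi : i < n - 1) :
    braidToTwoGen (BraidGroup.artinGen n i) = TwoGen.artinGen n i := by
  rw [BraidGroup.artinGen_of_lt n hi, braidToTwoGen_braidGen]

lemma twoGenToBraid_artinGen (hn : n ≠ 0) {k : ℕ} (hk : k < n - 1) :
    twoGenToBraid hn (TwoGen.artinGen n k) = BraidGroup.artinGen n k := by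
  simp only [TwoGen.artinGen, _root_.map_mul, _root_.map_inv, _root_.map_pow, twoGenToBraid_of,
    twoGenImage]
  exact BraidGroup.sigma_pow_mul_artinGen_zero hk

lemma braidToTwoGen_comp_twoGenToBraid (hn : 2 ≤ n) :
    braidToTwoGen.comp (twoGenToBraid (by omega)) =
      MonoidHom.id (PresentedGroup (twoGenRels n)) := by
  refine PresentedGroup.ext fun x => ?_
  rw [MonoidHom.comp_apply, twoGenToBraid_of, MonoidHom.id_apply]
  cases x
  · rw [twoGenImage, braidToTwoGen_artinGen (by omega), TwoGen.artinGen_zero]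
  · rw [twoGenImage, BraidGroup.sigma, map_list_prod, List.map_map,
      ← TwoGen.prod_artinGen (by omega)]
    exact congrArg List.prod (List.map_congr_left fun k hk =>
      braidToTwoGen_artinGen (List.mem_range.mp hk))

lemma twoGenToBraid_comp_braidToTwoGen (hn : n ≠ 0) :
    (twoGenToBraid hn).comp braidToTwoGen = MonoidHom.id (BraidGroup n) := by
  refine PresentedGroup.ext fun i => ?_
  change twoGenToBraid hn (braidToTwoGen (braidGen n i)) = braidGen n i
  rw [braidToTwoGen_braidGen, twoGenToBraid_artinGen hn i.isLt, BraidGroup.artinGen_of_lt]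

end Isomorphism

theorem braid_group_two_generator_presentation (n : ℕ) (hn : 2 ≤ n) :
    ∃ e : PresentedGroup (twoGenRels n) ≃* BraidGroup n,
      e (PresentedGroup.of TwoGen.s1) = braidGen n ⟨0, by omega⟩ ∧
      e (PresentedGroup.of TwoGen.s) =
        (List.ofFn (fun i : Fin (n - 1) => braidGen n i)).prod := by
  have hn₀ : n ≠ 0 := by omega
  refine ⟨MonoidHom.toMulEquiv (twoGenToBraid hn₀) braidToTwoGen
    (braidToTwoGen_comp_twoGenToBraid hn) (twoGenToBraid_comp_braidToTwoGen hn₀), ?_, ?_⟩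
  · exact (twoGenToBraid_of hn₀ _).trans (BraidGroup.artinGen_of_lt n (by omega))
  · exact (twoGenToBraid_of hn₀ _).trans BraidGroup.ofFn_braidGen_prod.symm
end

section
/- For every n ≥ 4, the Artin–Brieskorn braid group of type Dₙ is isomorphic to the group defined by the presentation with three generators σ₁, σ, ρ and relations: σ₁σⁱσ₁σ⁻ⁱ = σⁱσ₁σ⁻ⁱσ₁ for 2 ≤ i ≤ n/2; σⁿ = (σσ₁)ⁿ⁻¹; ρσⁱσ₁σ⁻ⁱ = σⁱσ₁σ⁻ⁱρ for i = 0, 2, 3, …, n−2; and ρσσ₁σ⁻¹ρ = σσ₁σ⁻¹ρσσ₁σ⁻¹; an isomorphism is given by σ₁ ↦ σ₁, ρ ↦ ρ, and σ ↦ σ₁σ₂⋯σₙ₋₁. -/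
/-!
Put `δ = σ₁σ₂⋯σₙ₋₁` in the type `Dₙ` group. The braid relations give `δσᵢδ⁻¹ = σᵢ₊₁` for
`i ≤ n - 2`, hence `δⁱσ₁δ⁻ⁱ = σᵢ₊₁`, and the full twist identity `(δσ₁)ⁿ⁻¹ = δⁿ`; so `σ₁, δ, ρ`
satisfy the three-generator relations.

Conversely, in the three-generator group let `tᵢ = σⁱσ₁σ⁻ⁱ`. Since `(σ₁σ)ᵐ = t₀t₁⋯tₘ₋₁σᵐ`, the
relation `σⁿ = (σσ₁)ⁿ⁻¹` says exactly that `σ = t₀t₁⋯tₙ₋₂`, and it makes `σⁿ` commute with `σ₁`,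
so `tᵢ` only depends on `i` mod `n`. This periodicity turns the commutations of `σ₁` with `tᵢ`,
`2 ≤ i ≤ n/2`, into all far commutations `tᵢtⱼ = tⱼtᵢ`, while `σ = t₀t₁C` with `C` commuting with
`t₀`, together with `t₁σ = σt₀`, gives the braid relation `t₀t₁t₀ = t₁t₀t₁`. Thus `σᵢ ↦ tᵢ₋₁`,
`ρ ↦ ρ` defines the inverse homomorphism.
-/

open FreeGroup

/-- Generators of the type `Dₙ` braid group: `σ₁, …, σ_{n-1}` (as `sig i`,
`i : Fin (n-1)`, `i` standing for `σ_{i+1}`) and `ρ`. -/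
inductive DGen (n : ℕ) : Type
  | sig (i : Fin (n - 1)) : DGen n
  | rho : DGen n

open DGen in
/-- The canonical relations of the Artin–Brieskorn group of type `Dₙ`:
braid relations among the `σᵢ`, `ρσᵢ = σᵢρ` for `i = 1, 3, 4, …, n−1` and
`ρσ₂ρ = σ₂ρσ₂`. -/
def typeDRels (n : ℕ) : Set (FreeGroup (DGen n)) :=
  {r | (∃ i j : Fin (n - 1), (i.val + 1 < j.val ∨ j.val + 1 < i.val) ∧
          r = of (sig i) * of (sig j) * (of (sig j) * of (sig i))⁻¹) ∨
       (∃ i j : Fin (n - 1), j.val = i.val + 1 ∧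
          r = of (sig i) * of (sig j) * of (sig i) *
              (of (sig j) * of (sig i) * of (sig j))⁻¹) ∨
       (∃ i : Fin (n - 1), i.val ≠ 1 ∧
          r = of rho * of (sig i) * (of (sig i) * of rho)⁻¹) ∨
       (∃ h : 1 < n - 1,
          r = of rho * of (sig ⟨1, h⟩) * of rho *
              (of (sig ⟨1, h⟩) * of rho * of (sig ⟨1, h⟩))⁻¹)}

/-- The Artin–Brieskorn braid group of type `Dₙ`. -/
def BraidGroupD (n : ℕ) : Type := PresentedGroup (typeDRels n)

noncomputable instance (n : ℕ) : Group (BraidGroupD n) :=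
  inferInstanceAs (Group (PresentedGroup (typeDRels n)))

/-- The three generators of the small presentation: σ₁, σ and ρ. -/
inductive ThreeGenD : Type
  | s1 : ThreeGenD
  | s : ThreeGenD
  | r : ThreeGenD

open ThreeGenD in
/-- The relations of the three-generator presentation of the type `Dₙ` braid
group. -/
def threeGenDRels (n : ℕ) : Set (FreeGroup ThreeGenD) :=
  {x | (∃ i : ℕ, 2 ≤ i ∧ 2 * i ≤ n ∧
          x = (of s1 * (of s) ^ i * of s1 * ((of s) ^ i)⁻¹) *
              ((of s) ^ i * of s1 * ((of s) ^ i)⁻¹ * of s1)⁻¹) ∨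
       x = (of s) ^ n * (((of s) * of s1) ^ (n - 1))⁻¹ ∨
       (∃ i : ℕ, (i = 0 ∨ (2 ≤ i ∧ i ≤ n - 2)) ∧
          x = (of r * (of s) ^ i * of s1 * ((of s) ^ i)⁻¹) *
              ((of s) ^ i * of s1 * ((of s) ^ i)⁻¹ * of r)⁻¹) ∨
       x = (of r * (of s * of s1 * (of s)⁻¹) * of r) *
           ((of s * of s1 * (of s)⁻¹) * of r * (of s * of s1 * (of s)⁻¹))⁻¹}

section ConjPow

variable {G H : Type*} [Group G] [Group H]

def conjPow (s a : G) (i : ℕ) : G := MulAut.conj (s ^ i) a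

lemma conjPow_apply (s a : G) (i : ℕ) : conjPow s a i = s ^ i * a * (s ^ i)⁻¹ := rfl

@[simp] lemma conjPow_zero (s a : G) : conjPow s a 0 = a := by simp [conjPow]

lemma conjPow_add (s a : G) (i j : ℕ) :
    conjPow s a (i + j) = MulAut.conj (s ^ i) (conjPow s a j) := by
  simp [conjPow, pow_add]

lemma map_conjPow (φ : G →* H) (s a : G) (i : ℕ) :
    φ (conjPow s a i) = conjPow (φ s) (φ a) i := by
  simp only [conjPow_apply, _root_.map_mul, _root_.map_inv, _root_.map_pow]

lemma Commute.conjPow_add {s a : G} {d : ℕ} (h : Commute a (conjPow s a d)) (i : ℕ) :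
    Commute (conjPow s a i) (conjPow s a (i + d)) := by
  rw [_root_.conjPow_add]
  exact h.map (MulAut.conj (s ^ i))

lemma conjPow_add_of_commute {s a : G} {n : ℕ} (h : Commute (s ^ n) a) (i : ℕ) :
    conjPow s a (i + n) = conjPow s a i := by
  have hn : conjPow s a n = a := by rw [conjPow_apply, h.eq, mul_inv_cancel_right]
  rw [conjPow_add, hn]
  rfl

lemma mul_pow_eq_prod_conjPow_mul_pow (s a : G) (m : ℕ) :
    (a * s) ^ m = ((List.range m).map (conjPow s a)).prod * s ^ m := by
  induction m with
  | zero => simp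
  | succ m ih =>
    rw [pow_succ, ih, List.prod_range_succ, conjPow_apply]
    group

end ConjPow

section BraidFamily

variable {G : Type*} [Group G]

structure IsBraidFamily (f : ℕ → G) (N : ℕ) : Prop where
  commute : ∀ i j, i + 2 ≤ j → j < N → Commute (f i) (f j)
  braid : ∀ i, i + 1 < N → f i * f (i + 1) * f i = f (i + 1) * f i * f (i + 1)

namespace IsBraidFamily

variable {f : ℕ → G} {N : ℕ}

lemma of_succ (h : IsBraidFamily f (N + 1)) : IsBraidFamily f N :=
  ⟨fun i j hij hj => h.commute i j hij (by omega), fun i hi => h.braid i (by omega)⟩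

lemma commute_prod_range (h : IsBraidFamily f N) {i m : ℕ} (hm : m < i) (hi : i < N) :
    Commute (f i) ((List.range m).map f).prod :=
  Commute.list_prod_right _ _ fun x hx => by
    obtain ⟨j, hj, rfl⟩ := List.mem_map.1 hx
    exact (h.commute j i (by simp at hj; omega) hi).symm

lemma semiconjBy_prod_range (h : IsBraidFamily f N) {i : ℕ} (hi : i + 1 < N) :
    SemiconjBy ((List.range N).map f).prod (f i) (f (i + 1)) := by
  induction N with
  | zero => omega
  | succ N ih =>
    unfold SemiconjBy
    rw [List.prod_range_succ]
    rcases Nat.lt_or_ge (i + 1) N with hlt | hge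
    · have hc := h.commute i N (by omega) (by omega)
      rw [mul_assoc, ← hc.eq, ← mul_assoc, (ih h.of_succ hlt).eq, mul_assoc]
    · obtain rfl : N = i + 1 := by omega
      have hc := h.commute_prod_range (Nat.lt_succ_self i) hi
      rw [List.prod_range_succ]
      calc _ = ((List.range i).map f).prod * (f i * f (i + 1) * f i) := by group
        _ = ((List.range i).map f).prod * f (i + 1) * (f i * f (i + 1)) := by
          rw [h.braid i hi]; group
        _ = f (i + 1) * ((List.range i).map f).prod * (f i * f (i + 1)) := by rw [hc.eq]
        _ = _ := by group

lemma conjPow_prod_range (h : IsBraidFamily f N) {i : ℕ} (hi : i < N) :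
    conjPow ((List.range N).map f).prod (f 0) i = f i := by
  induction i with
  | zero => simp
  | succ i ih =>
    conv_lhs => rw [add_comm i 1]
    rw [conjPow_add, pow_one, ih (by omega), MulAut.conj_apply,
      (h.semiconjBy_prod_range hi).eq, mul_inv_cancel_right]

/-- Both sides are the full twist `Δ²` of the braid group on `N + 1` strands. -/
lemma prod_range_mul_pow (h : IsBraidFamily f N) :
    (((List.range N).map f).prod * f 0) ^ N = ((List.range N).map f).prod ^ (N + 1) := by
  set δ := ((List.range N).map f).prod
  have key : (f 0 * δ) ^ N = δ * δ ^ N := by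
    rw [mul_pow_eq_prod_conjPow_mul_pow,
      List.map_congr_left fun i hi => h.conjPow_prod_range (List.mem_range.1 hi)]
  apply mul_right_cancel (b := δ)
  calc (δ * f 0) ^ N * δ = δ * (f 0 * δ) ^ N :=
        (SemiconjBy.pow_right (mul_assoc δ (f 0) δ).symm N).eq.symm
    _ = δ ^ (N + 1) * δ := by rw [key]; group

end IsBraidFamily

end BraidFamily

section Twist

variable {G : Type*} [Group G] {s a : G} {n : ℕ}

lemma commute_pow_of_twist (ht : s ^ n = (s * a) ^ (n - 1)) : Commute (s ^ n) a := by
  have hsa : Commute (s ^ n) (s * a) := by rw [ht]; exact Commute.pow_self _ _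
  simpa using (Commute.pow_self s n).inv_right.mul_right hsa

lemma eq_prod_conjPow_of_twist (hn : 1 ≤ n) (ht : s ^ n = (s * a) ^ (n - 1)) :
    s = ((List.range (n - 1)).map (conjPow s a)).prod := by
  obtain ⟨m, rfl⟩ : ∃ m, n = m + 1 := ⟨n - 1, by omega⟩
  rw [Nat.add_sub_cancel] at ht ⊢
  have h : s * s * s ^ m = s * ((List.range m).map (conjPow s a)).prod * s ^ m := by
    calc s * s * s ^ m = s ^ (m + 1) * s := by group
      _ = s * (a * s) ^ m := by rw [ht, ← (SemiconjBy.pow_right (mul_assoc s a s).symm m).eq]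
      _ = _ := by rw [mul_pow_eq_prod_conjPow_mul_pow, mul_assoc]
  exact mul_left_cancel (mul_right_cancel h)

variable (ht : s ^ n = (s * a) ^ (n - 1))
  (hc : ∀ i, 2 ≤ i → 2 * i ≤ n → Commute a (conjPow s a i))
include ht hc

lemma commute_conjPow_of_twist (i : ℕ) {d : ℕ} (hd : 2 ≤ d) (hdn : d + 2 ≤ n) :
    Commute (conjPow s a i) (conjPow s a (i + d)) := by
  by_cases hd' : 2 * d ≤ n
  · exact (hc d hd hd').conjPow_add i
  · have h := (hc (n - d) (by omega) (by omega)).conjPow_add (i + d)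
    rw [add_assoc, Nat.add_sub_cancel' (by omega : d ≤ n),
      conjPow_add_of_commute (commute_pow_of_twist ht)] at h
    exact h.symm

lemma conjPow_braid_of_twist (h3 : 3 ≤ n) :
    a * conjPow s a 1 * a = conjPow s a 1 * a * conjPow s a 1 := by
  set C := ((List.range (n - 3)).map fun j => conjPow s a (j + 2)).prod
  have hs : s = a * conjPow s a 1 * C := by
    refine (eq_prod_conjPow_of_twist (by omega) ht).trans ?_
    rw [show n - 1 = n - 3 + 1 + 1 by omega, List.prod_range_succ', List.prod_range_succ',
      conjPow_zero, mul_assoc]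
  have hC : Commute a C := Commute.list_prod_right _ _ fun x hx => by
    obtain ⟨j, hj, rfl⟩ := List.mem_map.1 hx
    simpa using commute_conjPow_of_twist ht hc 0 (d := j + 2) (by omega)
      (by simp at hj; omega)
  have h1 : conjPow s a 1 * (a * conjPow s a 1 * C) = a * conjPow s a 1 * C * a := by
    rw [← hs, conjPow_apply, pow_one, inv_mul_cancel_right]
  refine mul_right_cancel (b := C) ?_
  calc a * conjPow s a 1 * a * C = a * conjPow s a 1 * C * a := by
        rw [mul_assoc _ a, hC.eq, ← mul_assoc]
    _ = conjPow s a 1 * (a * conjPow s a 1 * C) := h1.symm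
    _ = conjPow s a 1 * a * conjPow s a 1 * C := by group

lemma isBraidFamily_conjPow_of_twist : IsBraidFamily (conjPow s a) (n - 1) where
  commute i j hij hj := by
    simpa [Nat.add_sub_cancel' (by omega : i ≤ j)] using
      commute_conjPow_of_twist ht hc i (d := j - i) (by omega) (by omega)
  braid i hi := by
    have h := congrArg (MulAut.conj (s ^ i)) (conjPow_braid_of_twist ht hc (by omega))
    simp only [_root_.map_mul, ← conjPow_add] at h
    exact h

end Twist

section Relations

variable {G : Type*} [Group G]

structure ThreeGenDRelations (n : ℕ) (s a r : G) : Prop where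
  commute_conjPow : ∀ i, 2 ≤ i → 2 * i ≤ n → Commute a (conjPow s a i)
  twist : s ^ n = (s * a) ^ (n - 1)
  rho_commute : ∀ i, (i = 0 ∨ 2 ≤ i ∧ i ≤ n - 2) → Commute r (conjPow s a i)
  rho_braid : r * conjPow s a 1 * r = conjPow s a 1 * r * conjPow s a 1

structure TypeDRelations (N : ℕ) (f : ℕ → G) (r : G) : Prop where
  isBraidFamily : IsBraidFamily f N
  rho_commute : ∀ i < N, i ≠ 1 → Commute r (f i)
  rho_braid : 1 < N → r * f 1 * r = f 1 * r * f 1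

def threeGenDValues (s a r : G) : ThreeGenD → G
  | .s1 => a
  | .s => s
  | .r => r

def typeDValues (n : ℕ) (f : ℕ → G) (r : G) : DGen n → G
  | .sig i => f i
  | .rho => r

lemma lift_mul_inv_eq_one_iff {α : Type*} {g : α → G} {x y : FreeGroup α} :
    FreeGroup.lift g (x * y⁻¹) = 1 ↔ FreeGroup.lift g x = FreeGroup.lift g y := by
  rw [_root_.map_mul, _root_.map_inv, mul_inv_eq_one]

lemma lift_threeGenDRels_eq_one_iff {n : ℕ} {s a r : G} :
    (∀ x ∈ threeGenDRels n, FreeGroup.lift (threeGenDValues s a r) x = 1) ↔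
      ThreeGenDRelations n s a r := by
  constructor
  · intro h
    refine ⟨fun i hi hin => ?_, ?_, fun i hi => ?_, ?_⟩
    · simpa [threeGenDValues, Commute, SemiconjBy, conjPow_apply, mul_assoc] using
        lift_mul_inv_eq_one_iff.1 (h _ (Or.inl ⟨i, hi, hin, rfl⟩))
    · simpa [threeGenDValues] using lift_mul_inv_eq_one_iff.1 (h _ (Or.inr (Or.inl rfl)))
    · simpa [threeGenDValues, Commute, SemiconjBy, conjPow_apply, mul_assoc] using
        lift_mul_inv_eq_one_iff.1 (h _ (Or.inr (Or.inr (Or.inl ⟨i, hi, rfl⟩))))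
    · simpa [threeGenDValues, Commute, SemiconjBy, conjPow_apply, mul_assoc] using
        lift_mul_inv_eq_one_iff.1 (h _ (Or.inr (Or.inr (Or.inr rfl))))
  · rintro ⟨hc, ht, hrc, hrb⟩ x (⟨i, hi, hin, rfl⟩ | rfl | ⟨i, hi, rfl⟩ | rfl) <;>
      refine lift_mul_inv_eq_one_iff.2 ?_
    · simpa [threeGenDValues, Commute, SemiconjBy, conjPow_apply, mul_assoc] using hc i hi hin
    · simpa [threeGenDValues] using ht
    · simpa [threeGenDValues, Commute, SemiconjBy, conjPow_apply, mul_assoc] using hrc i hi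
    · simpa [threeGenDValues, Commute, SemiconjBy, conjPow_apply, mul_assoc] using hrb

lemma lift_typeDRels_eq_one_iff {n : ℕ} {f : ℕ → G} {r : G} :
    (∀ x ∈ typeDRels n, FreeGroup.lift (typeDValues n f r) x = 1) ↔
      TypeDRelations (n - 1) f r := by
  constructor
  · intro h
    refine ⟨⟨fun i j hij hj => ?_, fun i hi => ?_⟩, fun i hi h1 => ?_, fun h1 => ?_⟩
    · simpa [typeDValues, Commute, SemiconjBy] using lift_mul_inv_eq_one_iff.1
        (h _ (Or.inl ⟨⟨i, by omega⟩, ⟨j, hj⟩, Or.inl (by simp; omega), rfl⟩))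
    · simpa [typeDValues] using lift_mul_inv_eq_one_iff.1
        (h _ (Or.inr (Or.inl ⟨⟨i, by omega⟩, ⟨i + 1, hi⟩, rfl, rfl⟩)))
    · simpa [typeDValues, Commute, SemiconjBy] using lift_mul_inv_eq_one_iff.1
        (h _ (Or.inr (Or.inr (Or.inl ⟨⟨i, hi⟩, h1, rfl⟩))))
    · simpa [typeDValues] using lift_mul_inv_eq_one_iff.1
        (h _ (Or.inr (Or.inr (Or.inr ⟨h1, rfl⟩))))
  · rintro ⟨⟨hc, hb⟩, hrc, hrb⟩ x
      (⟨i, j, hij | hij, rfl⟩ | ⟨i, j, hj, rfl⟩ | ⟨i, hi, rfl⟩ | ⟨h1, rfl⟩) <;>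
      refine lift_mul_inv_eq_one_iff.2 ?_ <;>
      simp only [_root_.map_mul, FreeGroup.lift_apply_of, typeDValues]
    · exact hc i j hij j.isLt
    · exact (hc j i hij i.isLt).symm
    · rw [hj]; exact hb i (hj ▸ j.isLt)
    · exact hrc i i.isLt hi
    · exact hrb h1

lemma TypeDRelations.threeGenDRelations {n : ℕ} {f : ℕ → G} {r : G} (hn : 3 ≤ n)
    (h : TypeDRelations (n - 1) f r) :
    ThreeGenDRelations n ((List.range (n - 1)).map f).prod (f 0) r := by
  have hconj (i : ℕ) (hi : i < n - 1) :
      conjPow ((List.range (n - 1)).map f).prod (f 0) i = f i :=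
    h.isBraidFamily.conjPow_prod_range hi
  refine ⟨fun i hi hin => ?_, ?_, fun i hi => ?_, ?_⟩
  · rw [hconj i (by omega)]
    exact h.isBraidFamily.commute 0 i (by omega) (by omega)
  · obtain ⟨N, rfl⟩ : ∃ N, n = N + 1 := ⟨n - 1, by omega⟩
    exact h.isBraidFamily.prod_range_mul_pow.symm
  · rw [hconj i (by omega)]
    exact h.rho_commute i (by omega) (by omega)
  · rw [hconj 1 (by omega)]
    exact h.rho_braid (by omega)

lemma ThreeGenDRelations.typeDRelations {n : ℕ} {s a r : G} (h : ThreeGenDRelations n s a r) :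
    TypeDRelations (n - 1) (conjPow s a) r where
  isBraidFamily := isBraidFamily_conjPow_of_twist h.twist h.commute_conjPow
  rho_commute i hi _ := h.rho_commute i (by omega)
  rho_braid _ := h.rho_braid

end Relations

lemma PresentedGroup.lift_of_eq_one {α : Type*} {rels : Set (FreeGroup α)} {x : FreeGroup α}
    (hx : x ∈ rels) : FreeGroup.lift (PresentedGroup.of (rels := rels)) x = 1 := by
  rw [show FreeGroup.lift PresentedGroup.of = PresentedGroup.mk rels from
    FreeGroup.ext_hom _ _ fun _ => by rw [FreeGroup.lift_apply_of]; rfl]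
  exact PresentedGroup.one_of_mem hx

lemma ofFn_val_eq_map_range {α : Type*} (f : ℕ → α) (N : ℕ) :
    List.ofFn (fun i : Fin N => f i) = (List.range N).map f :=
  List.ext_getElem (by simp) (by simp)

lemma threeGenDRelations_of (n : ℕ) :
    ThreeGenDRelations n (PresentedGroup.of (rels := threeGenDRels n) ThreeGenD.s)
      (PresentedGroup.of ThreeGenD.s1) (PresentedGroup.of ThreeGenD.r) := by
  have h : threeGenDValues (PresentedGroup.of (rels := threeGenDRels n) ThreeGenD.s)
      (PresentedGroup.of ThreeGenD.s1) (PresentedGroup.of ThreeGenD.r) = PresentedGroup.of := by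
    funext x
    cases x <;> rfl
  refine lift_threeGenDRels_eq_one_iff.1 fun x hx => ?_
  rw [h]
  exact PresentedGroup.lift_of_eq_one hx

namespace BraidGroupD

/-- `sig n m` is the generator `σ_{m+1}` for `m < n - 1`, and `1` for larger `m`. -/
noncomputable def sig (n m : ℕ) : BraidGroupD n :=
  if h : m < n - 1 then PresentedGroup.of (DGen.sig ⟨m, h⟩) else 1

lemma sig_of_lt {n m : ℕ} (h : m < n - 1) : sig n m = PresentedGroup.of (DGen.sig ⟨m, h⟩) :=
  dif_pos h

lemma typeDRelations_sig (n : ℕ) :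
    TypeDRelations (n - 1) (sig n) (PresentedGroup.of DGen.rho : BraidGroupD n) := by
  have h : typeDValues n (sig n) (PresentedGroup.of DGen.rho) = PresentedGroup.of := by
    funext x
    cases x with
    | sig i => exact sig_of_lt i.isLt
    | rho => rfl
  refine lift_typeDRels_eq_one_iff.1 fun x hx => ?_
  rw [h]
  exact PresentedGroup.lift_of_eq_one hx

lemma prod_range_sig (n : ℕ) : ((List.range (n - 1)).map (sig n)).prod =
    (List.ofFn fun i : Fin (n - 1) =>
      PresentedGroup.of (rels := typeDRels n) (DGen.sig i)).prod := by
  rw [← ofFn_val_eq_map_range]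
  exact congrArg List.prod (congrArg List.ofFn (funext fun i => sig_of_lt i.isLt))

noncomputable def ofThreeGenD (n : ℕ) (hn : 3 ≤ n) :
    PresentedGroup (threeGenDRels n) →* BraidGroupD n :=
  PresentedGroup.toGroup
    (lift_threeGenDRels_eq_one_iff.2 ((typeDRelations_sig n).threeGenDRelations hn))

noncomputable def toThreeGenD (n : ℕ) : BraidGroupD n →* PresentedGroup (threeGenDRels n) :=
  PresentedGroup.toGroup (lift_typeDRels_eq_one_iff.2 (threeGenDRelations_of n).typeDRelations)

variable {n : ℕ}

lemma ofThreeGenD_of (hn : 3 ≤ n) (x : ThreeGenD) :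
    ofThreeGenD n hn (PresentedGroup.of x) = threeGenDValues
      ((List.range (n - 1)).map (sig n)).prod (sig n 0) (PresentedGroup.of DGen.rho) x :=
  PresentedGroup.toGroup.of _

lemma toThreeGenD_of (x : DGen n) :
    toThreeGenD n (PresentedGroup.of x) = typeDValues n
      (conjPow (PresentedGroup.of ThreeGenD.s) (PresentedGroup.of ThreeGenD.s1))
      (PresentedGroup.of ThreeGenD.r) x :=
  PresentedGroup.toGroup.of _

lemma toThreeGenD_sig {m : ℕ} (hm : m < n - 1) :
    toThreeGenD n (sig n m) =
      conjPow (PresentedGroup.of ThreeGenD.s) (PresentedGroup.of ThreeGenD.s1) m := by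
  rw [sig_of_lt hm, toThreeGenD_of]
  rfl

lemma toThreeGenD_comp_ofThreeGenD (hn : 3 ≤ n) :
    (toThreeGenD n).comp (ofThreeGenD n hn) = MonoidHom.id _ := by
  refine PresentedGroup.ext fun x => ?_
  rw [MonoidHom.comp_apply, MonoidHom.id_apply, ofThreeGenD_of]
  cases x with
  | s1 => exact toThreeGenD_sig (by omega)
  | s =>
    dsimp only [threeGenDValues]
    rw [map_list_prod, List.map_map]
    refine (congrArg List.prod (List.map_congr_left fun m hm => ?_)).trans
      (eq_prod_conjPow_of_twist (by omega) (threeGenDRelations_of n).twist).symm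
    exact toThreeGenD_sig (List.mem_range.1 hm)
  | r => exact toThreeGenD_of DGen.rho

lemma ofThreeGenD_comp_toThreeGenD (hn : 3 ≤ n) :
    (ofThreeGenD n hn).comp (toThreeGenD n) = MonoidHom.id _ := by
  refine PresentedGroup.ext fun x => ?_
  show ofThreeGenD n hn (toThreeGenD n (PresentedGroup.of x)) = PresentedGroup.of x
  rw [toThreeGenD_of]
  cases x with
  | sig i =>
    rw [typeDValues, map_conjPow, ofThreeGenD_of, ofThreeGenD_of]
    dsimp only [threeGenDValues]
    rw [(typeDRelations_sig n).isBraidFamily.conjPow_prod_range i.isLt, sig_of_lt i.isLt]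
  | rho => exact ofThreeGenD_of hn ThreeGenD.r

end BraidGroupD

theorem typeD_three_generator_presentation (n : ℕ) (hn : 4 ≤ n) :
    ∃ e : PresentedGroup (threeGenDRels n) ≃* BraidGroupD n,
      e (PresentedGroup.of ThreeGenD.s1) =
        PresentedGroup.of (DGen.sig ⟨0, by omega⟩) ∧
      e (PresentedGroup.of ThreeGenD.r) = PresentedGroup.of DGen.rho ∧
      e (PresentedGroup.of ThreeGenD.s) =
        (List.ofFn (fun i : Fin (n - 1) =>
          PresentedGroup.of (rels := typeDRels n) (DGen.sig i))).prod := by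
  open BraidGroupD in
  have hn' : 3 ≤ n := by omega
  exact ⟨MonoidHom.toMulEquiv (ofThreeGenD n hn') (toThreeGenD n)
      (toThreeGenD_comp_ofThreeGenD hn') (ofThreeGenD_comp_toThreeGenD hn'),
    (ofThreeGenD_of hn' _).trans (sig_of_lt _),
    ofThreeGenD_of hn' ThreeGenD.r,
    (ofThreeGenD_of hn' _).trans (prod_range_sig n)⟩
end

section
/- For every n ≥ 4, the group defined by the presentation with generators σ₁, σ, ρ and relations σ₁σⁱσ₁σ⁻ⁱ = σⁱσ₁σ⁻ⁱσ₁ for 2 ≤ i ≤ n/2, σⁿ = (σσ₁)ⁿ⁻¹, ρσⁱσ₁σ⁻ⁱ = σⁱσ₁σ⁻ⁱρ for i = 0, 2, 3, …, n−2, ρσσ₁σ⁻¹ρ = σσ₁σ⁻¹ρσσ₁σ⁻¹, σ₁² = 1, and ρ² = 1 is isomorphic to the Coxeter group of type Dₙ. -/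
/-!
STATEMENT 4: For every n ≥ 4, the group presented by generators σ₁, σ, ρ and
relations σ₁σⁱσ₁σ⁻ⁱ = σⁱσ₁σ⁻ⁱσ₁ (2 ≤ i ≤ n/2), σⁿ = (σσ₁)ⁿ⁻¹,
ρσⁱσ₁σ⁻ⁱ = σⁱσ₁σ⁻ⁱρ (i = 0, 2, 3, …, n−2), ρσσ₁σ⁻¹ρ = σσ₁σ⁻¹ρσσ₁σ⁻¹,
σ₁² = 1 and ρ² = 1 is isomorphic to the Coxeter group of type Dₙ.
-/

open FreeGroup

/-- Generators of the Coxeter group of type `Dₙ`: `w₁, …, w_{n-1}` (as `w i`,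
`i : Fin (n-1)`, `i` standing for `w_{i+1}`) and `u`. -/
inductive CoxDGen (n : ℕ) : Type
  | w (i : Fin (n - 1)) : CoxDGen n
  | u : CoxDGen n

open CoxDGen in
/-- The Coxeter relations of type `Dₙ`: every generator is an involution,
`(wᵢwᵢ₊₁)³ = 1` for `1 ≤ i ≤ n−2`, `(uw₂)³ = 1`, `uwᵢ = wᵢu` for `i ≠ 2`,
and `wᵢwⱼ = wⱼwᵢ` for `|i−j| ≥ 2`. -/
def coxeterDRels (n : ℕ) : Set (FreeGroup (CoxDGen n)) :=
  {r | (∃ i : Fin (n - 1), r = (of (w i)) ^ 2) ∨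
       r = (of u) ^ 2 ∨
       (∃ i j : Fin (n - 1), j.val = i.val + 1 ∧
          r = (of (w i) * of (w j)) ^ 3) ∨
       (∃ h : 1 < n - 1, r = (of u * of (w ⟨1, h⟩)) ^ 3) ∨
       (∃ i : Fin (n - 1), i.val ≠ 1 ∧
          r = of u * of (w i) * (of (w i) * of u)⁻¹) ∨
       (∃ i j : Fin (n - 1), (i.val + 1 < j.val ∨ j.val + 1 < i.val) ∧
          r = of (w i) * of (w j) * (of (w j) * of (w i))⁻¹)}

/-- The Coxeter group of type `Dₙ`. -/
def CoxeterGroupD (n : ℕ) : Type := PresentedGroup (coxeterDRels n)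

noncomputable instance (n : ℕ) : Group (CoxeterGroupD n) :=
  inferInstanceAs (Group (PresentedGroup (coxeterDRels n)))

open ThreeGenD in
/-- The relations of the three-generator presentation of the type `Dₙ` braid
group, together with `σ₁² = 1` and `ρ² = 1`. -/
def threeGenCoxDRels (n : ℕ) : Set (FreeGroup ThreeGenD) :=
  {x | (∃ i : ℕ, 2 ≤ i ∧ 2 * i ≤ n ∧
          x = (of s1 * (of s) ^ i * of s1 * ((of s) ^ i)⁻¹) *
              ((of s) ^ i * of s1 * ((of s) ^ i)⁻¹ * of s1)⁻¹) ∨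
       x = (of s) ^ n * (((of s) * of s1) ^ (n - 1))⁻¹ ∨
       (∃ i : ℕ, (i = 0 ∨ (2 ≤ i ∧ i ≤ n - 2)) ∧
          x = (of r * (of s) ^ i * of s1 * ((of s) ^ i)⁻¹) *
              ((of s) ^ i * of s1 * ((of s) ^ i)⁻¹ * of r)⁻¹) ∨
       x = (of r * (of s * of s1 * (of s)⁻¹) * of r) *
           ((of s * of s1 * (of s)⁻¹) * of r * (of s * of s1 * (of s)⁻¹))⁻¹ ∨
       x = (of s1) ^ 2 ∨
       x = (of r) ^ 2}

/-!
The isomorphism sends σ₁ ↦ w₁, σ ↦ c = w₁w₂⋯wₙ₋₁, ρ ↦ u, with inverse wᵢ₊₁ ↦ σⁱσ₁σ⁻ⁱ, u ↦ ρ.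

In the Coxeter group the braid and commutation relations of w₁, …, wₙ₋₁ give cwᵢc⁻¹ = wᵢ₊₁, hence
cⁱw₁c⁻ⁱ = wᵢ₊₁ and (cw₁)ᵏ = w₂⋯wₖ₊₁cᵏ for k < n - 1; for k = n - 2 this yields
(cw₁)ⁿ⁻¹ = c·(w₁w₂⋯wₙ₋₁)·cⁿ⁻² = cⁿ.

In the three-generator group put bᵢ = σⁱσ₁σ⁻ⁱ. Since (σσ₁)ᵏ = b₁⋯bₖσᵏ, the relation σⁿ = (σσ₁)ⁿ⁻¹
says σ = b₁⋯bₙ₋₁; it also makes σⁿ commute with σ and σσ₁, so bₙ = σ₁. Conjugating by powers of σ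
turns the relations σ₁bᵢ = bᵢσ₁ (2 ≤ i ≤ n/2) into bᵢbⱼ = bⱼbᵢ for 2 ≤ j - i ≤ n - 2. In particular
b₃⋯bₙ₋₁ commutes with b₁, so b₂ = σb₁σ⁻¹ = (b₁b₂)b₁(b₁b₂)⁻¹, which is the braid relation.
-/

section SegProd

variable {G H : Type*} [Group G] [Group H]

def segProd (a : ℕ → G) (i k : ℕ) : G := ((List.range' i k).map a).prod

variable (a : ℕ → G)

@[simp]
theorem segProd_zero (i : ℕ) : segProd a i 0 = 1 := rfl

theorem segProd_add (i k l : ℕ) :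
    segProd a i (k + l) = segProd a i k * segProd a (i + k) l := by
  rw [segProd, ← List.range'_append, List.map_append, List.prod_append, one_mul]
  rfl

theorem segProd_succ (i k : ℕ) : segProd a i (k + 1) = segProd a i k * a (i + k) := by
  rw [segProd_add]; simp [segProd]

theorem segProd_succ' (i k : ℕ) : segProd a i (k + 1) = a i * segProd a (i + 1) k := by
  simp [segProd, List.range'_succ]

theorem commute_segProd {x : G} {i k : ℕ} (h : ∀ t < k, Commute x (a (i + t))) :
    Commute x (segProd a i k) := by
  refine Commute.list_prod_right _ _ fun y hy => ?_
  obtain ⟨j, hj, rfl⟩ := List.mem_map.1 hy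
  obtain ⟨t, ht, rfl⟩ := List.mem_range'.1 hj
  simpa using h t ht

theorem segProd_congr {b : ℕ → G} {i j : ℕ} (k : ℕ) (h : ∀ t < k, a (i + t) = b (j + t)) :
    segProd a i k = segProd b j k := by
  induction k with
  | zero => rfl
  | succ k ih =>
    rw [segProd_succ, segProd_succ, ih fun t ht => h t (by omega), h k (by omega)]

theorem map_segProd {F : Type*} [FunLike F G H] [MonoidHomClass F G H] (f : F) (i k : ℕ) :
    f (segProd a i k) = segProd (fun t => f (a t)) i k := by
  simp only [segProd, map_list_prod, List.map_map]; rfl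

end SegProd

section TypeA

variable {G : Type*} [Group G]

structure IsBraidA (a : ℕ → G) (m : ℕ) : Prop where
  braid : ∀ i, i + 1 < m → a i * a (i + 1) * a i = a (i + 1) * a i * a (i + 1)
  commute : ∀ i j, i + 2 ≤ j → j < m → Commute (a i) (a j)

namespace IsBraidA

variable {a : ℕ → G} {m : ℕ}

theorem segProd_mul (h : IsBraidA a m) {i : ℕ} (hi : i + 1 < m) :
    segProd a 0 m * a i = a (i + 1) * segProd a 0 m := by
  obtain ⟨r, rfl⟩ : ∃ r, m = i + 2 + r := ⟨m - (i + 2), by omega⟩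
  have hT : Commute (a i) (segProd a (i + 2) r) :=
    commute_segProd a fun t ht => h.commute _ _ (by omega) (by omega)
  have hP : Commute (a (i + 1)) (segProd a 0 i) :=
    commute_segProd a fun t ht => (h.commute _ _ (by omega) (by omega)).symm
  have h2 : segProd a i 2 = a i * a (i + 1) := by simp [segProd_succ]
  rw [segProd_add, segProd_add, zero_add, zero_add, h2]
  calc segProd a 0 i * (a i * a (i + 1)) * segProd a (i + 2) r * a i
      = segProd a 0 i * (a i * a (i + 1) * a i) * segProd a (i + 2) r := by
        rw [mul_assoc _ (segProd a _ r), ← hT.eq]; group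
    _ = (segProd a 0 i * a (i + 1)) * (a i * a (i + 1)) * segProd a (i + 2) r := by
        rw [h.braid i hi]; group
    _ = a (i + 1) * (segProd a 0 i * (a i * a (i + 1)) * segProd a (i + 2) r) := by
        rw [← hP.eq]; group

theorem segProd_pow_mul (h : IsBraidA a m) {k : ℕ} (hk : k < m) :
    segProd a 0 m ^ k * a 0 = a k * segProd a 0 m ^ k := by
  induction k with
  | zero => simp
  | succ k ih =>
    rw [pow_succ', mul_assoc, ih (by omega), ← mul_assoc, h.segProd_mul hk, mul_assoc]

theorem conj_segProd_pow (h : IsBraidA a m) {k : ℕ} (hk : k < m) :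
    MulAut.conj (segProd a 0 m ^ k) (a 0) = a k := by
  rw [MulAut.conj_apply, h.segProd_pow_mul hk, mul_inv_cancel_right]

theorem segProd_mul_pow_of_lt (h : IsBraidA a m) {k : ℕ} (hk : k < m) :
    (segProd a 0 m * a 0) ^ k = segProd a 1 k * segProd a 0 m ^ k := by
  induction k with
  | zero => simp
  | succ k ih =>
    rw [pow_succ, ih (by omega), mul_assoc, ← mul_assoc (segProd a 0 m ^ k), ← pow_succ,
      h.segProd_pow_mul hk, ← mul_assoc, segProd_succ, add_comm 1 k]

theorem segProd_mul_pow (h : IsBraidA a m) :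
    (segProd a 0 m * a 0) ^ m = segProd a 0 m ^ (m + 1) := by
  cases m with
  | zero => simp
  | succ k =>
    rw [pow_succ', h.segProd_mul_pow_of_lt (Nat.lt_succ_self k), ← mul_assoc, mul_assoc _ (a 0),
      ← segProd_succ', pow_succ' _ (k + 1), pow_succ' _ k, mul_assoc]

end IsBraidA

end TypeA

section ConjPow

variable {G : Type*} [Group G]

theorem conj_pow_conj_pow (s x : G) (i j : ℕ) :
    MulAut.conj (s ^ i) (MulAut.conj (s ^ j) x) = MulAut.conj (s ^ (i + j)) x := by
  rw [pow_add, _root_.map_mul, MulAut.mul_apply]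

theorem mul_pow_eq_segProd_conj_pow (s x : G) (k : ℕ) :
    (s * x) ^ k = segProd (fun j => MulAut.conj (s ^ j) x) 1 k * s ^ k := by
  induction k with
  | zero => simp
  | succ k ih =>
    rw [pow_succ, ih, segProd_succ, add_comm 1 k, MulAut.conj_apply]
    group

theorem segProd_conj_pow_succ (s x : G) (i k : ℕ) :
    segProd (fun j => MulAut.conj (s ^ j) x) (i + 1) k =
      MulAut.conj s (segProd (fun j => MulAut.conj (s ^ j) x) i k) := by
  rw [map_segProd]
  refine segProd_congr _ k fun t _ => ?_
  rw [add_right_comm, add_comm _ 1, ← conj_pow_conj_pow s x 1, pow_one]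

variable {n : ℕ} {s x : G}

theorem conj_pow_self_of_pow_eq (hpow : s ^ n = (s * x) ^ (n - 1)) :
    MulAut.conj (s ^ n) x = x := by
  have hs : Commute (s ^ n) s := (Commute.refl s).pow_left n
  have hsx : Commute (s ^ n) (s * x) := hpow ▸ (Commute.refl (s * x)).pow_left (n - 1)
  have hx : Commute (s ^ n) x := by simpa using hs.inv_right.mul_right hsx
  rw [MulAut.conj_apply, hx.eq, mul_inv_cancel_right]

theorem eq_segProd_conj_pow_of_pow_eq (hn : 1 ≤ n) (hpow : s ^ n = (s * x) ^ (n - 1)) :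
    s = segProd (fun j => MulAut.conj (s ^ j) x) 1 (n - 1) := by
  rw [mul_pow_eq_segProd_conj_pow, ← Nat.sub_add_cancel hn, Nat.add_sub_cancel,
    pow_succ'] at hpow
  exact mul_right_cancel hpow

theorem commute_conj_pow_of_le
    (hcomm : ∀ i, 2 ≤ i → 2 * i ≤ n → Commute x (MulAut.conj (s ^ i) x))
    (hpow : s ^ n = (s * x) ^ (n - 1)) {i : ℕ} (hi : 2 ≤ i) (hin : i ≤ n - 2) :
    Commute x (MulAut.conj (s ^ i) x) := by
  rcases le_or_gt (2 * i) n with h | h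
  · exact hcomm i hi h
  · have := (hcomm (n - i) (by omega) (by omega)).map (MulAut.conj (s ^ i))
    rwa [conj_pow_conj_pow, Nat.add_sub_cancel' (by omega), conj_pow_self_of_pow_eq hpow,
      Commute.symm_iff] at this

theorem commute_conj_pow_conj_pow
    (hcomm : ∀ i, 2 ≤ i → 2 * i ≤ n → Commute x (MulAut.conj (s ^ i) x))
    (hpow : s ^ n = (s * x) ^ (n - 1)) {i j : ℕ} (hij : i + 2 ≤ j) (hjn : j ≤ i + (n - 2)) :
    Commute (MulAut.conj (s ^ i) x) (MulAut.conj (s ^ j) x) := by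
  have := (commute_conj_pow_of_le hcomm hpow (i := j - i) (by omega) (by omega)).map
    (MulAut.conj (s ^ i))
  rwa [conj_pow_conj_pow, Nat.add_sub_cancel' (by omega)] at this

theorem braid_conj_pow (hn : 4 ≤ n)
    (hcomm : ∀ i, 2 ≤ i → 2 * i ≤ n → Commute x (MulAut.conj (s ^ i) x))
    (hpow : s ^ n = (s * x) ^ (n - 1)) (k : ℕ) :
    MulAut.conj (s ^ k) x * MulAut.conj (s ^ (k + 1)) x * MulAut.conj (s ^ k) x =
      MulAut.conj (s ^ (k + 1)) x * MulAut.conj (s ^ k) x * MulAut.conj (s ^ (k + 1)) x := by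
  set b : ℕ → G := fun j => MulAut.conj (s ^ j) x with hb
  have hconj : ∀ e i j l,
      MulAut.conj (s ^ e) (b i * b j * b l) = b (e + i) * b (e + j) * b (e + l) :=
    fun e i j l => by simp only [_root_.map_mul, hb, conj_pow_conj_pow]
  suffices h12 : b 1 * b 2 * b 1 = b 2 * b 1 * b 2 by
    have h01 : b 0 * b 1 * b 0 = b 1 * b 0 * b 1 :=
      (MulAut.conj (s ^ 1)).injective (by rw [hconj, hconj]; exact h12)
    simpa only [hconj, add_zero] using congrArg (MulAut.conj (s ^ k)) h01
  have hT : Commute (b 1) (segProd b 3 (n - 3)) :=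
    commute_segProd b fun t _ => commute_conj_pow_conj_pow hcomm hpow (by omega) (by omega)
  have hs : s = b 1 * b 2 * segProd b 3 (n - 3) := by
    rw [eq_segProd_conj_pow_of_pow_eq (by omega) hpow, show n - 1 = 2 + (n - 3) by omega,
      segProd_add]
    simp [segProd_succ, hb]
  have h2 : b 2 = MulAut.conj (b 1 * b 2) (b 1) := by
    calc b 2 = MulAut.conj (s ^ 1) (b 1) := (conj_pow_conj_pow s x 1 1).symm
      _ = MulAut.conj (b 1 * b 2) (b 1) := by
        rw [pow_one, hs, _root_.map_mul, MulAut.mul_apply, MulAut.conj_apply (segProd b 3 _),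
          ← hT.eq, mul_inv_cancel_right]
  rw [MulAut.conj_apply, eq_mul_inv_iff_mul_eq] at h2
  rw [mul_assoc (b 2), h2]

end ConjPow

theorem PresentedGroup.forall_lift_of_eq_one {α : Type*} (rels : Set (FreeGroup α)) :
    ∀ x ∈ rels, FreeGroup.lift (PresentedGroup.of (rels := rels)) x = 1 := fun x hx => by
  rw [show FreeGroup.lift PresentedGroup.of = PresentedGroup.mk rels from
    FreeGroup.ext_hom _ _ fun _ => lift_apply_of]
  exact PresentedGroup.one_of_mem hx

section Relations

variable {G : Type*} [Group G]

def CoxDGen.elim {n : ℕ} (a : ℕ → G) (u : G) : CoxDGen n → G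
  | .w i => a i
  | .u => u

def ThreeGenD.elim (x y z : G) : ThreeGenD → G
  | .s1 => x
  | .s => y
  | .r => z

structure CoxeterDRelations (n : ℕ) (a : ℕ → G) (u : G) : Prop where
  sq : ∀ i < n - 1, a i ^ 2 = 1
  u_sq : u ^ 2 = 1
  braid : ∀ i, i + 1 < n - 1 → (a i * a (i + 1)) ^ 3 = 1
  braid_u : 1 < n - 1 → (u * a 1) ^ 3 = 1
  commute_u : ∀ i < n - 1, i ≠ 1 → Commute u (a i)
  commute : ∀ i j, i + 2 ≤ j → j < n - 1 → Commute (a i) (a j)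

structure ThreeGenDRelations_s4 (n : ℕ) (s1 s r : G) : Prop where
  commute_s1 : ∀ i, 2 ≤ i → 2 * i ≤ n → Commute s1 (MulAut.conj (s ^ i) s1)
  pow_eq : s ^ n = (s * s1) ^ (n - 1)
  commute_r : ∀ i, (i = 0 ∨ 2 ≤ i ∧ i ≤ n - 2) → Commute r (MulAut.conj (s ^ i) s1)
  braid_r : r * MulAut.conj s s1 * r = MulAut.conj s s1 * r * MulAut.conj s s1
  s1_sq : s1 ^ 2 = 1
  r_sq : r ^ 2 = 1

theorem forall_lift_coxeterDRels_iff {n : ℕ} {a : ℕ → G} {u : G} :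
    (∀ x ∈ coxeterDRels n, FreeGroup.lift (CoxDGen.elim a u) x = 1) ↔
      CoxeterDRelations n a u := by
  simp only [coxeterDRels, Set.mem_ofPred_eq]
  constructor
  · intro h
    refine ⟨fun i hi => ?_, ?_, fun i hi => ?_, fun hn => ?_, fun i hi hi1 => ?_,
      fun i j hij hj => ?_⟩ <;>
      [have := h _ (Or.inl ⟨⟨i, hi⟩, rfl⟩);
       have := h _ (Or.inr (Or.inl rfl));
       have := h _ (Or.inr (Or.inr (Or.inl ⟨⟨i, by omega⟩, ⟨i + 1, hi⟩, rfl, rfl⟩)));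
       have := h _ (Or.inr (Or.inr (Or.inr (Or.inl ⟨hn, rfl⟩))));
       have := h _ (Or.inr (Or.inr (Or.inr (Or.inr (Or.inl ⟨⟨i, hi⟩, hi1, rfl⟩)))));
       have := h _ (Or.inr (Or.inr (Or.inr (Or.inr (Or.inr
         ⟨⟨i, by omega⟩, ⟨j, hj⟩, Or.inl (by simp only; omega), rfl⟩)))))] <;>
      simpa only [_root_.map_mul, _root_.map_inv, _root_.map_pow, lift_apply_of,
        mul_inv_eq_one, CoxDGen.elim, commute_iff_eq] using this
  · rintro ⟨h1, h2, h3, h4, h5, h6⟩ x (⟨i, rfl⟩ | rfl | ⟨i, j, hij, rfl⟩ | ⟨hn, rfl⟩ |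
      ⟨i, hi, rfl⟩ | ⟨i, j, hij | hij, rfl⟩) <;>
      simp only [_root_.map_mul, _root_.map_inv, _root_.map_pow, lift_apply_of, mul_inv_eq_one,
        CoxDGen.elim]
    · exact h1 i i.isLt
    · exact h2
    · rw [hij]; exact h3 i (hij ▸ j.isLt)
    · exact h4 hn
    · exact h5 i i.isLt hi
    · exact h6 i j (by omega) j.isLt
    · exact (h6 j i (by omega) i.isLt).symm

theorem commute_conj_iff {x g y : G} :
    Commute x (MulAut.conj g y) ↔ x * g * y * g⁻¹ = g * y * g⁻¹ * x := by
  simp only [Commute, SemiconjBy, MulAut.conj_apply, mul_assoc]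

theorem forall_lift_threeGenCoxDRels_iff {n : ℕ} {f : ThreeGenD → G} :
    (∀ x ∈ threeGenCoxDRels n, FreeGroup.lift f x = 1) ↔
      ThreeGenDRelations_s4 n (f .s1) (f .s) (f .r) := by
  simp only [threeGenCoxDRels, Set.mem_ofPred_eq]
  constructor
  · intro h
    refine ⟨fun i hi hin => ?_, ?_, fun i hi => ?_, ?_, ?_, ?_⟩ <;>
      [have := h _ (Or.inl ⟨i, hi, hin, rfl⟩);
       have := h _ (Or.inr (Or.inl rfl));
       have := h _ (Or.inr (Or.inr (Or.inl ⟨i, hi, rfl⟩)));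
       have := h _ (Or.inr (Or.inr (Or.inr (Or.inl rfl))));
       have := h _ (Or.inr (Or.inr (Or.inr (Or.inr (Or.inl rfl)))));
       have := h _ (Or.inr (Or.inr (Or.inr (Or.inr (Or.inr rfl)))))] <;>
      simp only [_root_.map_mul, _root_.map_inv, _root_.map_pow, lift_apply_of,
        mul_inv_eq_one] at this
    · exact commute_conj_iff.2 this
    · exact this
    · exact commute_conj_iff.2 this
    · simpa using this
    · exact this
    · exact this
  · rintro ⟨h1, h2, h3, h4, h5, h6⟩ x (⟨i, hi, hin, rfl⟩ | rfl | ⟨i, hi, rfl⟩ | rfl | rfl | rfl) <;>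
      simp only [_root_.map_mul, _root_.map_inv, _root_.map_pow, lift_apply_of, mul_inv_eq_one]
    · exact commute_conj_iff.1 (h1 i hi hin)
    · exact h2
    · exact commute_conj_iff.1 (h3 i hi)
    · simpa using h4
    · exact h5
    · exact h6

end Relations

section Translation

variable {G : Type*} [Group G] {n : ℕ}

theorem mul_pow_three_eq_one_iff {x y : G} (hx : x ^ 2 = 1) (hy : y ^ 2 = 1) :
    (x * y) ^ 3 = 1 ↔ x * y * x = y * x * y := by
  have hx' : x⁻¹ = x := inv_eq_of_mul_eq_one_right (by rwa [← pow_two])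
  have hy' : y⁻¹ = y := inv_eq_of_mul_eq_one_right (by rwa [← pow_two])
  have hcube : (x * y) ^ 3 = x * y * x * (y * x * y) := by
    simp only [pow_succ, pow_zero, one_mul, mul_assoc]
  rw [hcube, mul_eq_one_iff_eq_inv, mul_inv_rev, mul_inv_rev, hx', hy', mul_assoc y]

theorem CoxeterDRelations.isBraidA {a : ℕ → G} {u : G} (h : CoxeterDRelations n a u) :
    IsBraidA a (n - 1) where
  braid i hi := (mul_pow_three_eq_one_iff (h.sq i (by omega)) (h.sq (i + 1) hi)).1 (h.braid i hi)
  commute := h.commute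

theorem CoxeterDRelations.threeGenDRelations {a : ℕ → G} {u : G} (h : CoxeterDRelations n a u)
    (hn : 3 ≤ n) : ThreeGenDRelations_s4 n (a 0) (segProd a 0 (n - 1)) u := by
  have hA := h.isBraidA
  refine ⟨fun i hi hin => ?_, ?_, fun i hi => ?_, ?_, h.sq 0 (by omega), h.u_sq⟩
  · rw [hA.conj_segProd_pow (by omega)]
    exact h.commute 0 i (by omega) (by omega)
  · rw [hA.segProd_mul_pow, Nat.sub_add_cancel (by omega)]
  · rw [hA.conj_segProd_pow (by omega)]
    exact h.commute_u i (by omega) (by omega)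
  · rw [← pow_one (segProd a 0 (n - 1)), hA.conj_segProd_pow (by omega)]
    exact (mul_pow_three_eq_one_iff h.u_sq (h.sq 1 (by omega))).1 (h.braid_u (by omega))

theorem ThreeGenDRelations_s4.coxeterDRelations {s1 s r : G} (h : ThreeGenDRelations_s4 n s1 s r)
    (hn : 4 ≤ n) : CoxeterDRelations n (fun k => MulAut.conj (s ^ k) s1) r := by
  have hsq : ∀ k, (MulAut.conj (s ^ k) s1) ^ 2 = 1 := fun k => by
    rw [← map_pow, h.s1_sq, _root_.map_one]
  refine ⟨fun i _ => hsq i, h.r_sq, fun i _ => ?_, fun _ => ?_,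
    fun i _ hi1 => h.commute_r i (by omega),
    fun i j hij hj => commute_conj_pow_conj_pow h.commute_s1 h.pow_eq hij (by omega)⟩
  · exact (mul_pow_three_eq_one_iff (hsq i) (hsq (i + 1))).2
      (braid_conj_pow hn h.commute_s1 h.pow_eq i)
  · exact (mul_pow_three_eq_one_iff h.r_sq (hsq 1)).2 (by rw [pow_one]; exact h.braid_r)

end Translation

section Isomorphism

variable (n : ℕ)

noncomputable def coxeterDW (i : ℕ) : PresentedGroup (coxeterDRels n) :=
  if h : i < n - 1 then PresentedGroup.of (CoxDGen.w ⟨i, h⟩) else 1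

theorem coxeterDW_val (i : Fin (n - 1)) : coxeterDW n i = PresentedGroup.of (CoxDGen.w i) :=
  dif_pos i.isLt

theorem CoxDGen.elim_coxeterDW :
    CoxDGen.elim (coxeterDW n) (PresentedGroup.of .u) = PresentedGroup.of := by
  funext x
  cases x with
  | w i => exact coxeterDW_val n i
  | u => rfl

theorem coxeterDRelations_coxeterDW :
    CoxeterDRelations n (coxeterDW n) (PresentedGroup.of .u) :=
  forall_lift_coxeterDRels_iff.1
    (by rw [CoxDGen.elim_coxeterDW]; exact PresentedGroup.forall_lift_of_eq_one _)

theorem threeGenDRelations_of_s4 :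
    ThreeGenDRelations_s4 n (PresentedGroup.of (rels := threeGenCoxDRels n) .s1)
      (PresentedGroup.of .s) (PresentedGroup.of .r) :=
  forall_lift_threeGenCoxDRels_iff.1 (PresentedGroup.forall_lift_of_eq_one _)

variable {n}

noncomputable def toCoxeterD (hn : 3 ≤ n) :
    PresentedGroup (threeGenCoxDRels n) →* PresentedGroup (coxeterDRels n) :=
  PresentedGroup.toGroup (f := ThreeGenD.elim (coxeterDW n 0) (segProd (coxeterDW n) 0 (n - 1))
    (PresentedGroup.of .u))
    (forall_lift_threeGenCoxDRels_iff.2 ((coxeterDRelations_coxeterDW n).threeGenDRelations hn))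

noncomputable def ofCoxeterD (hn : 4 ≤ n) :
    PresentedGroup (coxeterDRels n) →* PresentedGroup (threeGenCoxDRels n) :=
  PresentedGroup.toGroup
    (f := CoxDGen.elim (fun k => MulAut.conj (PresentedGroup.of .s ^ k) (PresentedGroup.of .s1))
      (PresentedGroup.of .r))
    (forall_lift_coxeterDRels_iff.2 ((threeGenDRelations_of_s4 n).coxeterDRelations hn))

theorem toCoxeterD_of_s1 (hn : 3 ≤ n) :
    toCoxeterD hn (PresentedGroup.of .s1) = coxeterDW n 0 :=
  PresentedGroup.toGroup.of _

theorem toCoxeterD_of_s (hn : 3 ≤ n) :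
    toCoxeterD hn (PresentedGroup.of .s) = segProd (coxeterDW n) 0 (n - 1) :=
  PresentedGroup.toGroup.of _

theorem ofCoxeterD_coxeterDW (hn : 4 ≤ n) {k : ℕ} (hk : k < n - 1) :
    ofCoxeterD hn (coxeterDW n k) =
      MulAut.conj (PresentedGroup.of .s ^ k) (PresentedGroup.of .s1) := by
  rw [coxeterDW, dif_pos hk, ofCoxeterD, PresentedGroup.toGroup.of]
  rfl

theorem toCoxeterD_comp_ofCoxeterD (hn : 4 ≤ n) :
    (toCoxeterD (by omega)).comp (ofCoxeterD hn) = MonoidHom.id _ := by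
  refine PresentedGroup.ext fun x => ?_
  cases x with
  | w i =>
    rw [← coxeterDW_val, MonoidHom.comp_apply, ofCoxeterD_coxeterDW hn i.isLt, MulAut.conj_apply,
      _root_.map_mul, _root_.map_mul, _root_.map_inv, _root_.map_pow, toCoxeterD_of_s,
      toCoxeterD_of_s1, ← MulAut.conj_apply,
      (coxeterDRelations_coxeterDW n).isBraidA.conj_segProd_pow i.isLt, MonoidHom.id_apply]
  | u => rfl

theorem ofCoxeterD_comp_toCoxeterD (hn : 4 ≤ n) :
    (ofCoxeterD hn).comp (toCoxeterD (by omega)) = MonoidHom.id _ := by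
  refine PresentedGroup.ext fun x => ?_
  rw [MonoidHom.comp_apply, MonoidHom.id_apply]
  cases x with
  | s1 =>
    rw [toCoxeterD_of_s1, ofCoxeterD_coxeterDW hn (by omega), pow_zero, _root_.map_one,
      MulAut.one_apply]
  | s =>
    set s : PresentedGroup (threeGenCoxDRels n) := PresentedGroup.of .s
    have hs := eq_segProd_conj_pow_of_pow_eq (by omega) (threeGenDRelations_of_s4 n).pow_eq
    apply (MulAut.conj s).injective
    rw [toCoxeterD_of_s, map_segProd, segProd_congr _ (j := 0) _ fun t ht => by
        rw [zero_add, ofCoxeterD_coxeterDW hn ht],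
      ← segProd_conj_pow_succ, ← hs, MulAut.conj_apply, mul_inv_cancel_right]
  | r => rfl

end Isomorphism

theorem coxeterD_three_generator_presentation (n : ℕ) (hn : 4 ≤ n) :
    Nonempty (PresentedGroup (threeGenCoxDRels n) ≃* CoxeterGroupD n) :=
  ⟨MonoidHom.toMulEquiv _ _ (ofCoxeterD_comp_toCoxeterD hn) (toCoxeterD_comp_ofCoxeterD hn)⟩
end

section
/- The Artin group of type E₈ is isomorphic to the group defined by the presentation with three generators σ₁, σ, ω and relations: σ₁σⁱσ₁σ⁻ⁱ = σⁱσ₁σ⁻ⁱσ₁ for i = 2, 3, 4; σ⁸ = (σσ₁)⁷; ωσⁱσ₁σ⁻ⁱ = σⁱσ₁σ⁻ⁱω for i = 0, 1, 3, 4, 5, 6; and ωσ²σ₁σ⁻²ω = σ²σ₁σ⁻²ωσ²σ₁σ⁻²; an isomorphism is given by σ₁ ↦ σ₁, ω ↦ ω, and σ ↦ σ₁σ₂⋯σ₇. -/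
/-!
STATEMENT 5: The Artin group of type E₈ is isomorphic to the group presented
by three generators σ₁, σ, ω with relations σ₁σⁱσ₁σ⁻ⁱ = σⁱσ₁σ⁻ⁱσ₁
(i = 2, 3, 4), σ⁸ = (σσ₁)⁷, ωσⁱσ₁σ⁻ⁱ = σⁱσ₁σ⁻ⁱω (i = 0, 1, 3, 4, 5, 6) and
ωσ²σ₁σ⁻²ω = σ²σ₁σ⁻²ωσ²σ₁σ⁻², via σ₁ ↦ σ₁, ω ↦ ω, σ ↦ σ₁σ₂⋯σ₇.
-/

open FreeGroup

/-- Generators of the Artin group of type `E₈`: `σ₁, …, σ₇` (as `sig i`,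
`i : Fin 7`, `i` standing for `σ_{i+1}`) and `ω` (attached to the third node
of the A₇ chain). -/
inductive E8Gen : Type
  | sig (i : Fin 7) : E8Gen
  | om : E8Gen

open E8Gen in
/-- The canonical relations of the Artin group of type `E₈`. -/
def typeE8Rels : Set (FreeGroup E8Gen) :=
  {r | (∃ i j : Fin 7, (i.val + 1 < j.val ∨ j.val + 1 < i.val) ∧
          r = of (sig i) * of (sig j) * (of (sig j) * of (sig i))⁻¹) ∨
       (∃ i j : Fin 7, j.val = i.val + 1 ∧
          r = of (sig i) * of (sig j) * of (sig i) *
              (of (sig j) * of (sig i) * of (sig j))⁻¹) ∨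
       (∃ i : Fin 7, i.val ≠ 2 ∧
          r = of om * of (sig i) * (of (sig i) * of om)⁻¹) ∨
       r = of om * of (sig 2) * of om *
           (of (sig 2) * of om * of (sig 2))⁻¹}

/-- The Artin group of type `E₈`. -/
def ArtinE8 : Type := PresentedGroup typeE8Rels

noncomputable instance : Group ArtinE8 :=
  inferInstanceAs (Group (PresentedGroup typeE8Rels))

/-- The three generators σ₁, σ and ω. -/
inductive ThreeGenE8 : Type
  | s1 : ThreeGenE8
  | s : ThreeGenE8
  | w : ThreeGenE8

open ThreeGenE8 in
/-- The relations of the three-generator presentation of the type `E₈` Artin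
group. -/
def threeGenE8Rels : Set (FreeGroup ThreeGenE8) :=
  {x | (∃ i : ℕ, (i = 2 ∨ i = 3 ∨ i = 4) ∧
          x = (of s1 * (of s) ^ i * of s1 * ((of s) ^ i)⁻¹) *
              ((of s) ^ i * of s1 * ((of s) ^ i)⁻¹ * of s1)⁻¹) ∨
       x = (of s) ^ 8 * (((of s) * of s1) ^ 7)⁻¹ ∨
       (∃ i : ℕ, (i = 0 ∨ i = 1 ∨ i = 3 ∨ i = 4 ∨ i = 5 ∨ i = 6) ∧
          x = (of w * (of s) ^ i * of s1 * ((of s) ^ i)⁻¹) *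
              ((of s) ^ i * of s1 * ((of s) ^ i)⁻¹ * of w)⁻¹) ∨
       x = (of w * ((of s) ^ 2 * of s1 * ((of s) ^ 2)⁻¹) * of w) *
           (((of s) ^ 2 * of s1 * ((of s) ^ 2)⁻¹) * of w *
            ((of s) ^ 2 * of s1 * ((of s) ^ 2)⁻¹))⁻¹}

/-
Conjugation by δ = σ₁σ₂⋯σ₇ shifts σᵢ to σᵢ₊₁, so in the Artin group δⁱσ₁δ⁻ⁱ = σᵢ₊₁ and
(σ₁δ)⁷ = σ₁σ₂⋯σ₇ δ⁷ = δ⁸; this makes σ ↦ δ respect the three-generator relations.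
Conversely, put Aₖ = σᵏσ₁σ⁻ᵏ in the three-generator group. Since
(σ₁σ)⁷ = A₀A₁⋯A₆ σ⁷, the relation σ⁸ = (σσ₁)⁷ says exactly that σ = A₀A₁⋯A₆; it also makes σ⁸
commute with σσ₁ and hence with σ₁, so k ↦ Aₖ has period 8 and the commutations at distances
2, 3, 4 give those at distances 5, 6. The braid relation A₀A₁A₀ = A₁A₀A₁ then comes from
σ = A₀A₁X with X commuting with A₀ and σA₀σ⁻¹ = A₁. So σᵢ₊₁ ↦ Aᵢ is an inverse homomorphism.
-/

section

variable {G : Type*} [Group G]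

structure BraidRelations (b : ℕ → G) (n : ℕ) : Prop where
  comm : ∀ i j, i + 1 < j → j < n → Commute (b i) (b j)
  braid : ∀ i, i + 1 < n → b i * b (i + 1) * b i = b (i + 1) * b i * b (i + 1)

theorem mul_pow_eq_prod_conj_mul_pow (s t : G) (n : ℕ) :
    (s * t) ^ n = ((List.range n).map fun k => MulAut.conj (t ^ k) s).prod * t ^ n := by
  induction n with
  | zero => simp
  | succ n ih =>
    rw [pow_succ, ih, List.range_succ, List.map_append, List.prod_append, List.map_singleton,
      List.prod_singleton, MulAut.conj_apply]
    group

theorem braid_of_mul_mul_eq {a b x t : G} (ht : a * b * x = t) (hsemi : SemiconjBy t a b)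
    (hx : Commute a x) : a * b * a = b * a * b := by
  refine mul_right_cancel (b := x) ?_
  calc a * b * a * x = a * b * x * a := by rw [mul_assoc _ a, hx.eq, ← mul_assoc]
    _ = b * a * b * x := by rw [ht, hsemi.eq, ← ht, mul_assoc b, mul_assoc b]

namespace BraidRelations

variable {b : ℕ → G} {n : ℕ}

theorem semiconjBy_prod_range (h : BraidRelations b n) {i : ℕ} (hi : i + 1 < n) :
    SemiconjBy ((List.range n).map b).prod (b i) (b (i + 1)) := by
  suffices ∀ k, i + 2 ≤ k → k ≤ n →
      SemiconjBy ((List.range k).map b).prod (b i) (b (i + 1)) from this n hi le_rfl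
  intro k hik hkn
  induction k, hik using Nat.le_induction with
  | base =>
    have hprefix : Commute ((List.range i).map b).prod (b (i + 1)) :=
      Commute.list_prod_left _ _ fun x hx => by
        obtain ⟨j, hj, rfl⟩ := List.mem_map.1 hx
        exact h.comm j (i + 1) (by have := List.mem_range.1 hj; omega) hi
    have hbraid : SemiconjBy (b i * b (i + 1)) (b i) (b (i + 1)) := by
      rw [SemiconjBy, h.braid i hi, mul_assoc]
    simpa only [List.range_succ, List.map_append, List.prod_append, List.map_singleton,
      List.prod_singleton, mul_assoc] using SemiconjBy.mul_left hprefix hbraid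
  | succ k hik ih =>
    simpa only [List.range_succ, List.map_append, List.prod_append, List.map_singleton,
      List.prod_singleton] using (ih (by omega)).mul_left (h.comm i k (by omega) (by omega)).symm

theorem conj_pow_prod_range (h : BraidRelations b n) {k : ℕ} (hk : k < n) :
    MulAut.conj (((List.range n).map b).prod ^ k) (b 0) = b k := by
  induction k with
  | zero => simp
  | succ k ih =>
    rw [pow_succ', _root_.map_mul, MulAut.mul_apply, ih (by omega), MulAut.conj_apply,
      (h.semiconjBy_prod_range hk).eq, mul_inv_cancel_right]

theorem prod_mul_pow_eq_pow_succ (h : BraidRelations b n) :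
    (((List.range n).map b).prod * b 0) ^ n = ((List.range n).map b).prod ^ (n + 1) := by
  set δ := ((List.range n).map b).prod
  have hconj : (b 0 * δ) ^ n = δ ^ (n + 1) := by
    rw [mul_pow_eq_prod_conj_mul_pow, pow_succ']
    congr 2
    exact List.map_congr_left fun k hk => h.conj_pow_prod_range (List.mem_range.1 hk)
  have hsemi : SemiconjBy δ ((b 0 * δ) ^ n) ((δ * b 0) ^ n) :=
    SemiconjBy.pow_right (by simp [SemiconjBy, mul_assoc]) n
  rw [← mul_left_inj δ, ← hsemi.eq, hconj, ← pow_succ, ← pow_succ']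

end BraidRelations

section ConjPow

variable (t s : G)

theorem conj_pow_add (i m : ℕ) :
    MulAut.conj (t ^ (i + m)) s = MulAut.conj (t ^ m) (MulAut.conj (t ^ i) s) := by
  rw [add_comm, pow_add, _root_.map_mul, MulAut.mul_apply]

variable {t s}

theorem Commute.conj_pow_add {i j : ℕ}
    (h : Commute (MulAut.conj (t ^ i) s) (MulAut.conj (t ^ j) s)) (m : ℕ) :
    Commute (MulAut.conj (t ^ (i + m)) s) (MulAut.conj (t ^ (j + m)) s) := by
  rw [_root_.conj_pow_add, _root_.conj_pow_add]
  exact h.map (MulAut.conj (t ^ m))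

variable {n : ℕ}

theorem prod_conj_pow_eq_of_pow_succ_eq (h : t ^ (n + 1) = (t * s) ^ n) :
    ((List.range n).map fun k => MulAut.conj (t ^ k) s).prod = t := by
  set P := ((List.range n).map fun k => MulAut.conj (t ^ k) s).prod
  have hsemi : SemiconjBy t ((s * t) ^ n) ((t * s) ^ n) :=
    SemiconjBy.pow_right (by simp [SemiconjBy, mul_assoc]) n
  have key : t * (t ^ n * t) = t * (P * t ^ n) :=
    calc t * (t ^ n * t) = (t * s) ^ n * t := by rw [← h, pow_succ', mul_assoc]
      _ = t * (P * t ^ n) := by rw [← hsemi.eq, mul_pow_eq_prod_conj_mul_pow]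
  refine mul_right_cancel (b := t ^ n) ?_
  rw [← mul_left_cancel key, ← pow_succ, pow_succ']

theorem commute_pow_succ_of_pow_succ_eq (h : t ^ (n + 1) = (t * s) ^ n) :
    Commute s (t ^ (n + 1)) := by
  have hts : Commute (t * s) (t ^ (n + 1)) := h ▸ Commute.self_pow (t * s) n
  simpa using ((Commute.self_pow t (n + 1)).inv_left).mul_left hts

theorem conj_pow_add_succ_of_pow_succ_eq (h : t ^ (n + 1) = (t * s) ^ n) (k : ℕ) :
    MulAut.conj (t ^ (k + (n + 1))) s = MulAut.conj (t ^ k) s := by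
  rw [add_comm, _root_.conj_pow_add, MulAut.conj_apply (t ^ (n + 1)),
    ← (commute_pow_succ_of_pow_succ_eq h).eq, mul_inv_cancel_right]

theorem braidRelations_conj_pow (h : t ^ (n + 1) = (t * s) ^ n)
    (hcomm : ∀ j, 2 ≤ j → j < n → Commute s (MulAut.conj (t ^ j) s)) :
    BraidRelations (fun k => MulAut.conj (t ^ k) s) n where
  comm i j hij hjn := by
    have h0 : Commute (MulAut.conj (t ^ 0) s) (MulAut.conj (t ^ (j - i)) s) := by
      simpa only [pow_zero, _root_.map_one, MulAut.one_apply]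
        using hcomm (j - i) (by omega) (by omega)
    simpa only [zero_add, Nat.sub_add_cancel (show i ≤ j by omega)] using h0.conj_pow_add i
  braid i hi := by
    obtain ⟨m, rfl⟩ : ∃ m, n = m + 2 := ⟨n - 2, by omega⟩
    set X := ((List.range m).map fun k => MulAut.conj (t ^ (k + 1 + 1)) s).prod
    have hprod : s * MulAut.conj t s * X = t := by
      simpa only [List.range_succ_eq_map, List.map_cons, List.map_map, List.prod_cons,
        Function.comp_def, Nat.succ_eq_add_one, pow_zero, pow_one, _root_.map_one,
        MulAut.one_apply, zero_add, mul_assoc] using prod_conj_pow_eq_of_pow_succ_eq h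
    have hX : Commute s X := Commute.list_prod_right _ _ fun x hx => by
      obtain ⟨k, hk, rfl⟩ := List.mem_map.1 hx
      exact hcomm (k + 1 + 1) (by omega) (by have := List.mem_range.1 hk; omega)
    have hbraid0 : MulAut.conj (t ^ 0) s * MulAut.conj (t ^ 1) s * MulAut.conj (t ^ 0) s =
        MulAut.conj (t ^ 1) s * MulAut.conj (t ^ 0) s * MulAut.conj (t ^ 1) s := by
      simpa only [pow_zero, pow_one, _root_.map_one, MulAut.one_apply]
        using braid_of_mul_mul_eq hprod (by simp [SemiconjBy]) hX
    simpa only [_root_.map_mul, ← _root_.conj_pow_add, zero_add, add_comm 1 i]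
      using congrArg (MulAut.conj (t ^ i)) hbraid0

end ConjPow

end

theorem PresentedGroup.mk_of {α : Type*} {rels : Set (FreeGroup α)} (x : α) :
    PresentedGroup.mk rels (FreeGroup.of x) = PresentedGroup.of x :=
  rfl

theorem E8Gen.lift_rels_eq_one {H : Type*} [Group H] {b : ℕ → H} {c : H}
    (hb : BraidRelations b 7) (hc : ∀ i < 7, i ≠ 2 → Commute c (b i))
    (hc2 : c * b 2 * c = b 2 * c * b 2) :
    ∀ r ∈ typeE8Rels, FreeGroup.lift (fun | .sig i => b i | .om => c) r = 1 := by
  rintro r (⟨i, j, hij, rfl⟩ | ⟨i, j, hij, rfl⟩ | ⟨i, hi, rfl⟩ | rfl) <;>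
    simp only [_root_.map_mul, _root_.map_inv, FreeGroup.lift_apply_of, mul_inv_eq_one]
  · rcases hij with hij | hij
    · exact hb.comm i j hij j.isLt
    · exact (hb.comm j i hij i.isLt).symm
  · rw [hij]
    exact hb.braid i (by omega)
  · exact hc i i.isLt hi
  · exact hc2

theorem ThreeGenE8.lift_rels_eq_one {H : Type*} [Group H] {a d c : H}
    (ha : ∀ i, i = 2 ∨ i = 3 ∨ i = 4 → Commute a (MulAut.conj (d ^ i) a))
    (hd : d ^ 8 = (d * a) ^ 7)
    (hc : ∀ i, i = 0 ∨ i = 1 ∨ i = 3 ∨ i = 4 ∨ i = 5 ∨ i = 6 →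
      Commute c (MulAut.conj (d ^ i) a))
    (hc2 : c * MulAut.conj (d ^ 2) a * c = MulAut.conj (d ^ 2) a * c * MulAut.conj (d ^ 2) a) :
    ∀ r ∈ threeGenE8Rels, FreeGroup.lift (fun | .s1 => a | .s => d | .w => c) r = 1 := by
  rintro r (⟨i, hi, rfl⟩ | rfl | ⟨i, hi, rfl⟩ | rfl) <;>
    simp only [_root_.map_mul, _root_.map_inv, _root_.map_pow, FreeGroup.lift_apply_of,
      mul_inv_eq_one]
  · simpa only [commute_iff_eq, MulAut.conj_apply, mul_assoc] using ha i hi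
  · exact hd
  · simpa only [commute_iff_eq, MulAut.conj_apply, mul_assoc] using hc i hi
  · simpa only [MulAut.conj_apply, mul_assoc] using hc2

namespace ArtinE8

open Fin.NatCast

/-- `sig i` is `σᵢ₊₁`. Its index is read modulo 7, so only `sig i` with `i < 7` is meaningful. -/
noncomputable def sig (i : ℕ) : ArtinE8 := PresentedGroup.of (E8Gen.sig i)

noncomputable def om : ArtinE8 := PresentedGroup.of E8Gen.om

theorem sig_val (i : Fin 7) : sig i = PresentedGroup.of (E8Gen.sig i) := by
  rw [sig, Fin.cast_val_eq_self]

theorem braidRelations_sig : BraidRelations sig 7 where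
  comm i j hij hj := by
    have := PresentedGroup.one_of_mem (show _ ∈ typeE8Rels from Or.inl ⟨i, j,
      Or.inl (by rw [Fin.val_cast_of_lt hj, Fin.val_cast_of_lt (by omega)]; omega), rfl⟩)
    simp only [_root_.map_mul, _root_.map_inv, PresentedGroup.mk_of, mul_inv_eq_one] at this
    exact this
  braid i hi := by
    have := PresentedGroup.one_of_mem (show _ ∈ typeE8Rels from Or.inr (Or.inl ⟨i, (i + 1 : ℕ),
      by rw [Fin.val_cast_of_lt hi, Fin.val_cast_of_lt (by omega)], rfl⟩))
    simp only [_root_.map_mul, _root_.map_inv, PresentedGroup.mk_of, mul_inv_eq_one] at this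
    exact this

theorem commute_om_sig {i : ℕ} (hi : i < 7) (h2 : i ≠ 2) : Commute om (sig i) := by
  have := PresentedGroup.one_of_mem (show _ ∈ typeE8Rels from
    Or.inr (Or.inr (Or.inl ⟨i, by rwa [Fin.val_cast_of_lt hi], rfl⟩)))
  simp only [_root_.map_mul, _root_.map_inv, PresentedGroup.mk_of, mul_inv_eq_one] at this
  exact this

theorem om_sig_two_braid : om * sig 2 * om = sig 2 * om * sig 2 := by
  have := PresentedGroup.one_of_mem (show _ ∈ typeE8Rels from Or.inr (Or.inr (Or.inr rfl)))
  simp only [_root_.map_mul, _root_.map_inv, PresentedGroup.mk_of, mul_inv_eq_one] at this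
  exact this

end ArtinE8

local notation "δ" => List.prod (List.map ArtinE8.sig (List.range 7))

local notation "G₃" => PresentedGroup threeGenE8Rels

local notation "σ₁" => (PresentedGroup.of ThreeGenE8.s1 : G₃)

local notation "σ" => (PresentedGroup.of ThreeGenE8.s : G₃)

local notation "ω" => (PresentedGroup.of ThreeGenE8.w : G₃)

namespace ThreeGenE8

theorem commute_s1_conj {i : ℕ} (hi : i = 2 ∨ i = 3 ∨ i = 4) :
    Commute σ₁ (MulAut.conj (σ ^ i) σ₁) := by
  have := PresentedGroup.one_of_mem (show _ ∈ threeGenE8Rels from Or.inl ⟨i, hi, rfl⟩)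
  simp only [_root_.map_mul, _root_.map_inv, _root_.map_pow, PresentedGroup.mk_of,
    mul_inv_eq_one] at this
  simpa only [commute_iff_eq, MulAut.conj_apply, mul_assoc] using this

theorem s_pow_eight : σ ^ 8 = (σ * σ₁) ^ 7 := by
  simpa only [_root_.map_mul, _root_.map_inv, _root_.map_pow, PresentedGroup.mk_of,
    mul_inv_eq_one] using
    PresentedGroup.one_of_mem (show _ ∈ threeGenE8Rels from Or.inr (Or.inl rfl))

theorem commute_w_conj {i : ℕ} (hi : i = 0 ∨ i = 1 ∨ i = 3 ∨ i = 4 ∨ i = 5 ∨ i = 6) :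
    Commute ω (MulAut.conj (σ ^ i) σ₁) := by
  have := PresentedGroup.one_of_mem
    (show _ ∈ threeGenE8Rels from Or.inr (Or.inr (Or.inl ⟨i, hi, rfl⟩)))
  simp only [_root_.map_mul, _root_.map_inv, _root_.map_pow, PresentedGroup.mk_of,
    mul_inv_eq_one] at this
  simpa only [commute_iff_eq, MulAut.conj_apply, mul_assoc] using this

theorem w_conj_braid :
    ω * MulAut.conj (σ ^ 2) σ₁ * ω = MulAut.conj (σ ^ 2) σ₁ * ω * MulAut.conj (σ ^ 2) σ₁ := by
  have := PresentedGroup.one_of_mem (show _ ∈ threeGenE8Rels from Or.inr (Or.inr (Or.inr rfl)))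
  simp only [_root_.map_mul, _root_.map_inv, _root_.map_pow, PresentedGroup.mk_of,
    mul_inv_eq_one] at this
  simpa only [MulAut.conj_apply, mul_assoc] using this

theorem braidRelations_conj : BraidRelations (fun k => MulAut.conj (σ ^ k) σ₁) 7 := by
  refine braidRelations_conj_pow s_pow_eight fun j hj2 hj7 => ?_
  by_cases hj4 : j ≤ 4
  · exact commute_s1_conj (by omega)
  -- distances 5 and 6 are distances 3 and 2 taken backwards, modulo the period 8
  have hperiod : MulAut.conj (σ ^ 8) σ₁ = σ₁ := by
    simpa only [zero_add, pow_zero, _root_.map_one, MulAut.one_apply]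
      using conj_pow_add_succ_of_pow_succ_eq s_pow_eight 0
  have hcomm {i : ℕ} (hi : i = 2 ∨ i = 3 ∨ i = 4) :
      Commute (MulAut.conj (σ ^ 0) σ₁) (MulAut.conj (σ ^ i) σ₁) := by
    simpa only [pow_zero, _root_.map_one, MulAut.one_apply] using commute_s1_conj hi
  interval_cases j
  · simpa only [zero_add, Nat.reduceAdd, hperiod]
      using ((hcomm (i := 3) (by omega)).conj_pow_add 5).symm
  · simpa only [zero_add, Nat.reduceAdd, hperiod]
      using ((hcomm (i := 2) (by omega)).conj_pow_add 6).symm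

end ThreeGenE8

namespace ArtinE8

theorem conj_pow_sig_zero {k : ℕ} (hk : k < 7) : MulAut.conj (δ ^ k) (sig 0) = sig k :=
  braidRelations_sig.conj_pow_prod_range hk

noncomputable def ofThreeGen : G₃ →* ArtinE8 :=
  PresentedGroup.toGroup <| ThreeGenE8.lift_rels_eq_one (a := sig 0) (d := δ) (c := om)
    (fun i hi => by
      rw [conj_pow_sig_zero (by omega)]
      exact braidRelations_sig.comm 0 i (by omega) (by omega))
    braidRelations_sig.prod_mul_pow_eq_pow_succ.symm
    (fun i hi => by
      rw [conj_pow_sig_zero (by omega)]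
      exact commute_om_sig (by omega) (by omega))
    (by rw [conj_pow_sig_zero (by omega)]; exact om_sig_two_braid)

noncomputable def toThreeGen : ArtinE8 →* G₃ :=
  PresentedGroup.toGroup <| E8Gen.lift_rels_eq_one ThreeGenE8.braidRelations_conj
    (fun _ _ _ => ThreeGenE8.commute_w_conj (by omega)) ThreeGenE8.w_conj_braid

theorem ofThreeGen_s1 : ofThreeGen σ₁ = sig 0 := PresentedGroup.toGroup.of _

theorem ofThreeGen_s : ofThreeGen σ = δ := PresentedGroup.toGroup.of _

theorem ofThreeGen_w : ofThreeGen ω = om := PresentedGroup.toGroup.of _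

theorem toThreeGen_sig {i : ℕ} (hi : i < 7) : toThreeGen (sig i) = MulAut.conj (σ ^ i) σ₁ := by
  refine (PresentedGroup.toGroup.of _).trans ?_
  dsimp only
  rw [Fin.val_cast_of_lt hi]

theorem toThreeGen_comp_ofThreeGen : toThreeGen.comp ofThreeGen = MonoidHom.id G₃ := by
  refine PresentedGroup.ext fun x => ?_
  cases x with
  | s1 =>
    rw [MonoidHom.comp_apply, ofThreeGen_s1, toThreeGen_sig (by omega)]
    simp
  | s =>
    rw [MonoidHom.comp_apply, ofThreeGen_s, map_list_prod, List.map_map, MonoidHom.id_apply,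
      ← prod_conj_pow_eq_of_pow_succ_eq ThreeGenE8.s_pow_eight]
    exact congrArg List.prod <| List.map_congr_left fun i hi =>
      toThreeGen_sig (List.mem_range.1 hi)
  | w => rfl

theorem ofThreeGen_comp_toThreeGen : ofThreeGen.comp toThreeGen = MonoidHom.id ArtinE8 := by
  refine PresentedGroup.ext fun x => ?_
  cases x with
  | sig i =>
    change ofThreeGen (toThreeGen (PresentedGroup.of (E8Gen.sig i))) =
      PresentedGroup.of (E8Gen.sig i)
    rw [← sig_val, toThreeGen_sig i.isLt, MulAut.conj_apply, _root_.map_mul, _root_.map_mul,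
      _root_.map_inv, _root_.map_pow, ofThreeGen_s, ofThreeGen_s1, ← MulAut.conj_apply,
      conj_pow_sig_zero i.isLt]
  | om => rfl

noncomputable def threeGenEquiv : G₃ ≃* ArtinE8 :=
  ofThreeGen.toMulEquiv toThreeGen toThreeGen_comp_ofThreeGen ofThreeGen_comp_toThreeGen

end ArtinE8

theorem artinE8_three_generator_presentation :
    ∃ e : PresentedGroup threeGenE8Rels ≃* ArtinE8,
      e (PresentedGroup.of ThreeGenE8.s1) = PresentedGroup.of (E8Gen.sig 0) ∧
      e (PresentedGroup.of ThreeGenE8.w) = PresentedGroup.of E8Gen.om ∧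
      e (PresentedGroup.of ThreeGenE8.s) =
        (List.ofFn (fun i : Fin 7 =>
          PresentedGroup.of (rels := typeE8Rels) (E8Gen.sig i))).prod := by
  refine ⟨ArtinE8.threeGenEquiv, ArtinE8.ofThreeGen_s1, ArtinE8.ofThreeGen_w, ?_⟩
  rw [ArtinE8.threeGenEquiv, MonoidHom.toMulEquiv_apply, ArtinE8.ofThreeGen_s, List.ofFn_eq_map,
    ← List.map_coe_finRange_eq_range, List.map_map]
  exact congrArg List.prod <| List.map_congr_left fun i _ => ArtinE8.sig_val i
end

section
/- For every n ≥ 3, the singular braid monoid SBₙ is isomorphic to the monoid defined by the presentation with generators σ₁, σ₁⁻¹, σ, σ⁻¹, x₁ and relations: σ₁σⁱσ₁σ⁻ⁱ = σⁱσ₁σ⁻ⁱσ₁ for 2 ≤ i ≤ n/2; σⁿ = (σσ₁)ⁿ⁻¹; x₁σⁱσ₁σ⁻ⁱ = σⁱσ₁σ⁻ⁱx₁ for i = 0, 2, 3, …, n−2; x₁σⁱx₁σ⁻ⁱ = σⁱx₁σ⁻ⁱx₁ for 2 ≤ i ≤ n/2; σⁿx₁ = x₁σⁿ; x₁σσ₁σ⁻¹σ₁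 = σσ₁σ⁻¹σ₁σx₁σ⁻¹; σ₁σ₁⁻¹ = σ₁⁻¹σ₁ = 1; and σσ⁻¹ = σ⁻¹σ = 1; an isomorphism is given by σ₁ ↦ σ₁, x₁ ↦ x₁, and σ ↦ σ₁σ₂⋯σₙ₋₁. -/
/-!
STATEMENT 8: For every n ≥ 3, the singular braid monoid SBₙ is isomorphic to
the monoid presented by generators σ₁, σ₁⁻¹, σ, σ⁻¹, x₁ with the relations
listed below, via σ₁ ↦ σ₁, x₁ ↦ x₁, σ ↦ σ₁σ₂⋯σₙ₋₁.
-/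

open FreeMonoid

/-- Generators of the singular braid monoid `SBₙ`: `σᵢ`, `σᵢ⁻¹`, `xᵢ` for
`i = 1, …, n-1` (index `i : Fin (n-1)` stands for subscript `i+1`). -/
inductive SBGen (n : ℕ) : Type
  | sig (i : Fin (n - 1)) : SBGen n
  | sinv (i : Fin (n - 1)) : SBGen n
  | x (i : Fin (n - 1)) : SBGen n

open SBGen in
/-- The defining relations of the singular braid monoid `SBₙ`. -/
inductive sbRel (n : ℕ) : FreeMonoid (SBGen n) → FreeMonoid (SBGen n) → Prop
  | comm_ss (i j : Fin (n - 1)) (h : i.val + 1 < j.val ∨ j.val + 1 < i.val) :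
      sbRel n (of (sig i) * of (sig j)) (of (sig j) * of (sig i))
  | comm_xx (i j : Fin (n - 1)) (h : i.val + 1 < j.val ∨ j.val + 1 < i.val) :
      sbRel n (of (x i) * of (x j)) (of (x j) * of (x i))
  | comm_xs (i j : Fin (n - 1)) (h : i.val + 1 ≠ j.val ∧ j.val + 1 ≠ i.val) :
      sbRel n (of (x i) * of (sig j)) (of (sig j) * of (x i))
  | braid (i j : Fin (n - 1)) (h : j.val = i.val + 1) :
      sbRel n (of (sig i) * of (sig j) * of (sig i))
              (of (sig j) * of (sig i) * of (sig j))
  | braid_x₁ (i j : Fin (n - 1)) (h : j.val = i.val + 1) :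
      sbRel n (of (sig i) * of (sig j) * of (x i))
              (of (x j) * of (sig i) * of (sig j))
  | braid_x₂ (i j : Fin (n - 1)) (h : j.val = i.val + 1) :
      sbRel n (of (sig j) * of (sig i) * of (x j))
              (of (x i) * of (sig j) * of (sig i))
  | inv_right (i : Fin (n - 1)) : sbRel n (of (sig i) * of (sinv i)) 1
  | inv_left (i : Fin (n - 1)) : sbRel n (of (sinv i) * of (sig i)) 1

/-- The singular braid monoid `SBₙ`. -/
def SingBraidMonoid (n : ℕ) : Type := PresentedMonoid (sbRel n)

instance (n : ℕ) : Monoid (SingBraidMonoid n) :=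
  inferInstanceAs (Monoid (PresentedMonoid (sbRel n)))

/-- The five generators σ₁, σ₁⁻¹, σ, σ⁻¹ and x₁. -/
inductive FiveGen : Type
  | s1 : FiveGen
  | s1i : FiveGen
  | s : FiveGen
  | si : FiveGen
  | x1 : FiveGen

open FiveGen in
/-- The relations of the five-generator presentation of `SBₙ`
(`σ⁻ⁱ` is written with the generator σ⁻¹). -/
inductive fiveGenRel (n : ℕ) : FreeMonoid FiveGen → FreeMonoid FiveGen → Prop
  | rel₁ (i : ℕ) (h₁ : 2 ≤ i) (h₂ : 2 * i ≤ n) :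
      fiveGenRel n (of s1 * (of s) ^ i * of s1 * (of si) ^ i)
                   ((of s) ^ i * of s1 * (of si) ^ i * of s1)
  | rel₂ : fiveGenRel n ((of s) ^ n) ((of s * of s1) ^ (n - 1))
  | rel₃ (i : ℕ) (h : i = 0 ∨ (2 ≤ i ∧ i ≤ n - 2)) :
      fiveGenRel n (of x1 * (of s) ^ i * of s1 * (of si) ^ i)
                   ((of s) ^ i * of s1 * (of si) ^ i * of x1)
  | rel₄ (i : ℕ) (h₁ : 2 ≤ i) (h₂ : 2 * i ≤ n) :
      fiveGenRel n (of x1 * (of s) ^ i * of x1 * (of si) ^ i)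
                   ((of s) ^ i * of x1 * (of si) ^ i * of x1)
  | rel₅ : fiveGenRel n ((of s) ^ n * of x1) (of x1 * (of s) ^ n)
  | rel₆ : fiveGenRel n (of x1 * of s * of s1 * of si * of s1)
                        (of s * of s1 * of si * of s1 * of s * of x1 * of si)
  | inv₁ : fiveGenRel n (of s1 * of s1i) 1
  | inv₂ : fiveGenRel n (of s1i * of s1) 1
  | inv₃ : fiveGenRel n (of s * of si) 1
  | inv₄ : fiveGenRel n (of si * of s) 1


/-!
Write `δ = σ₁σ₂⋯σₙ₋₁`. In `SBₙ`, conjugation by `δ` shifts indices, `δσᵢδ⁻¹ = σᵢ₊₁` and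
`δxᵢδ⁻¹ = xᵢ₊₁` for `i ≤ n - 2`. So `σ₁ ↦ σ₁, x₁ ↦ x₁, σ ↦ δ` respects the five-generator
relations: conjugated by powers of `δ` they become defining relations of `SBₙ`, except
`δⁿ = (δσ₁)ⁿ⁻¹` and `δⁿx₁ = x₁δⁿ`, which say that both sides of the first are the full twist `Δ²`
and that `Δ²` commutes with `x₁`.

Conversely, in the five-generator monoid put `σᵢ₊₁ = σⁱσ₁σ⁻ⁱ` and `xᵢ₊₁ = σⁱx₁σ⁻ⁱ`. The relation
`σⁿ = (σσ₁)ⁿ⁻¹` makes `σⁿ` commute with `σ₁` and gives `σ = σ₁σ₂⋯σₙ₋₁`. Hence conjugation by `σ`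
has period `n` on `σ₁` and `x₁`, which turns the commutation relations for `i ≤ n/2` into those
for `i ≤ n - 2`; and `σ = σ₁σ₂W` with `W` commuting with `σ₁` and `x₁`, together with
`σσ₁σ⁻¹ = σ₂` and `σx₁σ⁻¹ = x₂`, gives `σ₁σ₂σ₁ = σ₂σ₁σ₂` and `σ₁σ₂x₁ = x₂σ₁σ₂`. The two
homomorphisms are inverse to each other on generators.

Families of generators are indexed from `0`: `a i` plays the role of `σᵢ₊₁`.
-/

open ConjAct

section MulDistribMulAction

variable {A M : Type*} [Monoid A] [Monoid M] [MulDistribMulAction A M] {g : A} {y z : M} {n k : ℕ}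

theorem SemiconjBy.smul_distrib {x : M} (h : SemiconjBy x y z) (g : A) :
    SemiconjBy (g • x) (g • y) (g • z) := by
  simpa [SemiconjBy, smul_mul'] using congrArg (g • ·) h.eq

theorem Commute.smul_distrib (h : Commute y z) (g : A) : Commute (g • y) (g • z) :=
  SemiconjBy.smul_distrib h g

theorem Commute.pow_smul_pow_smul {i j : ℕ} (h : Commute y (g ^ (j - i) • z)) (hij : i ≤ j) :
    Commute (g ^ i • y) (g ^ j • z) := by
  simpa [← mul_smul, ← pow_add, Nat.add_sub_cancel' hij] using h.smul_distrib (g ^ i)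

theorem commute_pow_sub_smul (hz : g ^ n • z = z) (h : Commute y (g ^ k • z)) (hk : k ≤ n) :
    Commute (g ^ (n - k) • y) z := by
  simpa [← mul_smul, ← pow_add, Nat.sub_add_cancel hk, hz] using h.smul_distrib (g ^ (n - k))

theorem commute_pow_smul_self_of_le_sub_two (hy : g ^ n • y = y)
    (h : ∀ i, 2 ≤ i → 2 * i ≤ n → Commute y (g ^ i • y)) (hk : 2 ≤ k)
    (hkn : k ≤ n - 2) : Commute y (g ^ k • y) := by
  rcases le_total (2 * k) n with hk' | hk'
  · exact h k hk hk'
  · have := (commute_pow_sub_smul hy (h (n - k) (by omega) (by omega)) (Nat.sub_le n k)).symm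
    rwa [Nat.sub_sub_self (by omega)] at this

end MulDistribMulAction

namespace ConjAct

variable {M N : Type*} [Monoid M] [Monoid N]

theorem units_pow_smul_eq_iff (u : Mˣ) (k : ℕ) (a b : M) :
    toConjAct u ^ k • a = b ↔ SemiconjBy ((u : M) ^ k) a b := by
  rw [← map_pow, units_smul_def, ofConjAct_toConjAct, Units.mul_inv_eq_iff_eq_mul,
    Units.val_pow_eq_pow_val]
  rfl

theorem units_pow_smul_def (u : Mˣ) (k : ℕ) (a : M) :
    toConjAct u ^ k • a = ↑u ^ k * a * ↑u⁻¹ ^ k := by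
  rw [← map_pow, units_smul_def, ofConjAct_toConjAct, ← inv_pow]
  simp

theorem map_units_pow_smul (f : M →* N) (u : Mˣ) (k : ℕ) (a : M) :
    f (toConjAct u ^ k • a) = toConjAct (Units.map f u) ^ k • f a := by
  simp [units_pow_smul_def]

end ConjAct

section OrderedProducts

variable {M N : Type*} [Monoid M] [Monoid N] {a f g : ℕ → M} {d y z : M} {i k m : ℕ}

def ascProd (a : ℕ → M) (k : ℕ) : M := ((List.range k).map a).prod

def descProd (a : ℕ → M) (k : ℕ) : M := ((List.range k).reverse.map a).prod

@[simp] theorem ascProd_zero : ascProd a 0 = 1 := rfl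

@[simp] theorem descProd_zero : descProd a 0 = 1 := rfl

theorem ascProd_succ : ascProd a (k + 1) = ascProd a k * a k := List.prod_range_succ a k

theorem ascProd_succ' : ascProd a (k + 1) = a 0 * ascProd (fun i => a (i + 1)) k :=
  List.prod_range_succ' a k

theorem descProd_succ : descProd a (k + 1) = a k * descProd a k := by
  simp [descProd, List.range_succ]

theorem map_ascProd {F : Type*} [FunLike F M N] [MonoidHomClass F M N] (φ : F) :
    φ (ascProd a k) = ascProd (fun i => φ (a i)) k := by
  simp [ascProd, map_list_prod, Function.comp_def]

theorem ascProd_congr (h : ∀ i < k, f i = g i) : ascProd f k = ascProd g k :=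
  congrArg List.prod (List.map_congr_left fun i hi => h i (List.mem_range.1 hi))

theorem commute_ascProd (h : ∀ i < k, Commute (a i) y) : Commute (ascProd a k) y :=
  Commute.list_prod_left _ _ (by simpa using h)

theorem SemiconjBy.list_prod_map {ι : Type*} {f g : ι → M} :
    ∀ {l : List ι}, (∀ i ∈ l, SemiconjBy d (f i) (g i)) →
      SemiconjBy d (l.map f).prod (l.map g).prod
  | [], _ => SemiconjBy.one_right d
  | i :: l, h => by
    simpa using (h i (by simp)).mul_right (list_prod_map fun j hj => h j (by simp [hj]))

theorem semiconjBy_ascProd (h : ∀ i < k, SemiconjBy d (f i) (g i)) :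
    SemiconjBy d (ascProd f k) (ascProd g k) :=
  SemiconjBy.list_prod_map (by simpa using h)

theorem semiconjBy_descProd (h : ∀ i < k, SemiconjBy d (f i) (g i)) :
    SemiconjBy d (descProd f k) (descProd g k) :=
  SemiconjBy.list_prod_map (by simpa using h)

theorem SemiconjBy.pow_of_shift (h : ∀ i, i + 1 < m → SemiconjBy d (a i) (a (i + 1)))
    (hk : i + k < m) : SemiconjBy (d ^ k) (a i) (a (i + k)) := by
  induction k generalizing i with
  | zero => simp
  | succ k ih =>
    rw [pow_succ, show i + (k + 1) = i + 1 + k by omega]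
    exact (ih (by omega)).mul_left (h i (by omega))

theorem semiconjBy_ascProd_of_semiconjBy_mul (him : i + 2 ≤ m)
    (hbase : SemiconjBy (a i * a (i + 1)) y z) (hz : ∀ k < i, Commute (a k) z)
    (hy : ∀ k, i + 2 ≤ k → k < m → Commute (a k) y) : SemiconjBy (ascProd a m) y z := by
  induction m, him using Nat.le_induction with
  | base =>
    rw [ascProd_succ, ascProd_succ, mul_assoc]
    exact SemiconjBy.mul_left (commute_ascProd hz) hbase
  | succ m hm ih =>
    rw [ascProd_succ]
    exact (ih fun k hk hkm => hy k hk (by omega)).mul_left (hy m hm (by omega))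

end OrderedProducts

section BraidFamilies

variable {M : Type*} [Monoid M] {m : ℕ} {a x : ℕ → M}

structure IsBraidFamily_s8 (m : ℕ) (a : ℕ → M) : Prop where
  commute : ∀ i j, i + 2 ≤ j → j < m → Commute (a i) (a j)
  braid : ∀ i, i + 1 < m → a i * a (i + 1) * a i = a (i + 1) * a i * a (i + 1)

structure IsSingularBraidFamily (m : ℕ) (a x : ℕ → M) : Prop extends IsBraidFamily_s8 m a where
  commute_xx : ∀ i j, i + 2 ≤ j → j < m → Commute (x i) (x j)
  commute_xa : ∀ i j, i < m → j < m → i + 1 ≠ j → j + 1 ≠ i → Commute (x i) (a j)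
  braid_x₁ : ∀ i, i + 1 < m → a i * a (i + 1) * x i = x (i + 1) * a i * a (i + 1)
  braid_x₂ : ∀ i, i + 1 < m → a (i + 1) * a i * x (i + 1) = x i * a (i + 1) * a i

namespace IsBraidFamily_s8

theorem mono (h : IsBraidFamily_s8 m a) {m' : ℕ} (hm : m' ≤ m) : IsBraidFamily_s8 m' a where
  commute i j hij hj := h.commute i j hij (by omega)
  braid i hi := h.braid i (by omega)

theorem ascProd_semiconjBy (h : IsBraidFamily_s8 m a) {i : ℕ} (hi : i + 1 < m) :
    SemiconjBy (ascProd a m) (a i) (a (i + 1)) :=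
  semiconjBy_ascProd_of_semiconjBy_mul hi (by simpa [SemiconjBy, mul_assoc] using h.braid i hi)
    (fun k hk => h.commute k (i + 1) (by omega) hi) (fun k hk hkm => (h.commute i k hk hkm).symm)

theorem ascProd_pow_eq (h : IsBraidFamily_s8 (m + 1) a) :
    ascProd a (m + 1) ^ (m + 2) = (ascProd a (m + 1) * a 0) ^ (m + 1) := by
  set δ := ascProd a (m + 1) with hδ
  have hshift : ∀ i, i + 1 < m + 1 → SemiconjBy δ (a i) (a (i + 1)) :=
    fun i hi => h.ascProd_semiconjBy hi
  have hpre : SemiconjBy δ (ascProd a m) (ascProd (fun i => a (i + 1)) m) :=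
    semiconjBy_ascProd fun i hi => hshift i (by omega)
  have hpow : ∀ k ≤ m, SemiconjBy (δ ^ k) (a 0) (a k) := fun k hk => by
    simpa using SemiconjBy.pow_of_shift hshift (i := 0) (k := k) (by omega)
  have hclaim : ∀ k ≤ m, (δ * a 0) ^ k = ascProd (fun i => a (i + 1)) k * δ ^ k := by
    intro k hk
    induction k with
    | zero => simp
    | succ k ih =>
      rw [pow_succ, ih (by omega), mul_assoc, ← mul_assoc (δ ^ k), ← pow_succ, (hpow _ hk).eq,
        ascProd_succ, mul_assoc]
  calc δ ^ (m + 2) = δ * (ascProd a m * a m) * δ ^ m := by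
        rw [hδ, ← ascProd_succ, pow_succ', pow_succ', mul_assoc]
    _ = ascProd (fun i => a (i + 1)) m * δ ^ m * (δ * a 0) := by
        rw [← mul_assoc, hpre.eq, mul_assoc _ (a m), ← (hpow m le_rfl).eq, mul_assoc, mul_assoc,
          ← mul_assoc δ, ← pow_succ', pow_succ, mul_assoc]
    _ = (δ * a 0) ^ (m + 1) := by rw [← hclaim m le_rfl, pow_succ]

theorem ascProd_succ_pow {s : ℕ} (h : IsBraidFamily_s8 (s + 1) a) {k t : ℕ} (hkt : k + t = s + 1) :
    ascProd a (s + 1) ^ k = ascProd a s ^ k * descProd (fun i => a (t + i)) k := by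
  induction k generalizing t with
  | zero => simp
  | succ k ih =>
    have hsemi : SemiconjBy (ascProd a (s + 1)) (descProd (fun i => a (t + i)) k)
        (descProd (fun i => a (t + 1 + i)) k) :=
      semiconjBy_descProd fun i hi => by
        rw [add_right_comm]; exact h.ascProd_semiconjBy (by omega)
    rw [pow_succ, ih (t := t + 1) (by omega), mul_assoc, ← hsemi.eq, ascProd_succ, descProd_succ,
      show t + k = s by omega, pow_succ]
    simp only [mul_assoc]

end IsBraidFamily_s8

namespace IsSingularBraidFamily

theorem ascProd_semiconjBy_x (h : IsSingularBraidFamily m a x) {i : ℕ} (hi : i + 1 < m) :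
    SemiconjBy (ascProd a m) (x i) (x (i + 1)) :=
  semiconjBy_ascProd_of_semiconjBy_mul hi (by simpa [SemiconjBy, mul_assoc] using h.braid_x₁ i hi)
    (fun k hk => (h.commute_xa (i + 1) k hi (by omega) (by omega) (by omega)).symm)
    (fun k hk hkm => (h.commute_xa i k (by omega) hkm (by omega) (by omega)).symm)

theorem commute_x_descProd_mul_ascProd (h : IsSingularBraidFamily m a x) {s : ℕ} (hs : s < m) :
    Commute (x 0) (descProd a (s + 1) * ascProd a (s + 1)) := by
  induction s with
  | zero =>
    have hx := h.commute_xa 0 0 hs hs (by omega) (by omega)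
    simpa [descProd_succ, ascProd_succ] using hx.mul_right hx
  | succ s ih =>
    rcases s with _ | s
    · have h₁ := h.braid_x₁ 0 hs
      have h₂ := h.braid_x₂ 0 hs
      simp only [descProd_succ, ascProd_succ, descProd_zero, ascProd_zero, mul_one, one_mul]
      calc x 0 * (a 1 * a 0 * (a 0 * a 1)) = a 1 * a 0 * x 1 * (a 0 * a 1) := by
            rw [h₂]; simp only [mul_assoc]
        _ = a 1 * a 0 * (a 0 * a 1) * x 0 := by
            rw [mul_assoc _ (x 1), ← mul_assoc (x 1), ← h₁]; simp only [mul_assoc]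
    · have hx := h.commute_xa 0 (s + 2) (by omega) hs (by omega) (by omega)
      rw [descProd_succ, ascProd_succ (k := s + 2), mul_assoc, ← mul_assoc _ _ (a (s + 2))]
      exact hx.mul_right ((ih (by omega)).mul_right hx)

/-- `ascProd a s ^ (s + 1)` is the full twist on `s + 1` strands, and the full twist on `s + 2`
strands is the one on `s + 1` strands times `σₛ₊₁⋯σ₁σ₁⋯σₛ₊₁` (`ascProd_succ_pow`). -/
theorem commute_x_ascProd_pow (h : IsSingularBraidFamily m a x) {s : ℕ} (hs : s ≤ m) :
    Commute (x 0) (ascProd a s ^ (s + 1)) := by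
  induction s with
  | zero => simp
  | succ s ih =>
    have hΔ := (h.mono hs).ascProd_succ_pow (k := s + 1) (t := 0) rfl
    simp only [zero_add] at hΔ
    rw [pow_succ, hΔ, mul_assoc]
    exact (ih (by omega)).mul_right (h.commute_x_descProd_mul_ascProd (by omega))

end IsSingularBraidFamily

end BraidFamilies

section TwoGeneratorBraidGroup

variable {G : Type*} [Group G] {n : ℕ} {u v : G}

theorem commute_pow_of_pow_eq_mul_pow (h : u ^ n = (u * v) ^ (n - 1)) : Commute (u ^ n) v := by
  have huv : Commute (u ^ n) (u * v) := h ▸ (Commute.self_pow (u * v) (n - 1)).symm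
  simpa using ((Commute.self_pow u n).symm.inv_right).mul_right huv

theorem mul_pow_succ_eq_mul_ascProd_conj (u v : G) (k : ℕ) :
    (u * v) ^ (k + 1) = u * ascProd (fun i => toConjAct u ^ i • v) (k + 1) * u ^ k := by
  induction k with
  | zero => simp [ascProd_succ]
  | succ k ih =>
    rw [pow_succ, ih, ascProd_succ (k := k + 1), ← map_pow, toConjAct_smul]
    group

theorem ascProd_conj_eq_of_pow_eq (h : u ^ n = (u * v) ^ (n - 1)) (hn : 2 ≤ n) :
    ascProd (fun i => toConjAct u ^ i • v) (n - 1) = u := by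
  obtain ⟨k, rfl⟩ : ∃ k, n = k + 2 := ⟨n - 2, by omega⟩
  rw [show k + 2 - 1 = k + 1 by omega] at h ⊢
  rw [mul_pow_succ_eq_mul_ascProd_conj, pow_succ', pow_succ', ← mul_assoc] at h
  exact (mul_left_cancel (mul_right_cancel h)).symm

theorem eq_mul_mul_ascProd_of_pow_eq (h : u ^ n = (u * v) ^ (n - 1)) (hn : 3 ≤ n) :
    u = v * (toConjAct u • v) * ascProd (fun i => toConjAct u ^ (i + 2) • v) (n - 3) := by
  conv_lhs => rw [← ascProd_conj_eq_of_pow_eq h (by omega), show n - 1 = n - 3 + 1 + 1 by omega]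
  simp [ascProd_succ', mul_assoc]

end TwoGeneratorBraidGroup

theorem semiconjBy_conjAct_of_eq_mul {M : Type*} [Monoid M] {u w : Mˣ} {p y : M}
    (hu : (u : M) = p * w) (hw : Commute (w : M) y) : SemiconjBy p y (toConjAct u • y) := by
  have hu' := ((ConjAct.units_pow_smul_eq_iff u 1 y _).1 (by rw [pow_one])).eq
  rw [pow_one, hu, mul_assoc, hw.eq, ← mul_assoc, ← mul_assoc] at hu'
  exact (Units.mul_left_inj w).1 hu'

section FiveGenRelations

variable {M : Type*} [Monoid M]

structure SatisfiesFiveGenRel (n : ℕ) (u v : Mˣ) (x : M) : Prop where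
  commute_conj : ∀ i, 2 ≤ i → 2 * i ≤ n → Commute (v : M) (toConjAct u ^ i • (v : M))
  pow_eq : u ^ n = (u * v) ^ (n - 1)
  commute_x_conj : ∀ i, i = 0 ∨ 2 ≤ i ∧ i ≤ n - 2 →
    Commute x (toConjAct u ^ i • (v : M))
  commute_x_conj_x : ∀ i, 2 ≤ i → 2 * i ≤ n → Commute x (toConjAct u ^ i • x)
  commute_pow_x : Commute ((u : M) ^ n) x
  braid_x : x * (toConjAct u • (v : M)) * v = toConjAct u • (v : M) * v * (toConjAct u • x)

namespace SatisfiesFiveGenRel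

variable {n : ℕ} {u v : Mˣ} {x : M}

theorem conjAct_pow_smul_v (h : SatisfiesFiveGenRel n u v x) : toConjAct u ^ n • (v : M) = v := by
  have := (commute_pow_of_pow_eq_mul_pow h.pow_eq).map (Units.coeHom M)
  rw [map_pow, Units.coeHom_apply, Units.coeHom_apply] at this
  exact (ConjAct.units_pow_smul_eq_iff u n _ _).2 this

theorem commute_v_conj_of_le_sub_two (h : SatisfiesFiveGenRel n u v x) {k : ℕ} (hk : 2 ≤ k)
    (hkn : k ≤ n - 2) : Commute (v : M) (toConjAct u ^ k • (v : M)) :=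
  commute_pow_smul_self_of_le_sub_two h.conjAct_pow_smul_v h.commute_conj hk hkn

theorem commute_x_conj_x_of_le_sub_two (h : SatisfiesFiveGenRel n u v x) {k : ℕ} (hk : 2 ≤ k)
    (hkn : k ≤ n - 2) : Commute x (toConjAct u ^ k • x) :=
  commute_pow_smul_self_of_le_sub_two ((ConjAct.units_pow_smul_eq_iff u n _ _).2 h.commute_pow_x)
    h.commute_x_conj_x hk hkn

theorem commute_conj_x_v (h : SatisfiesFiveGenRel n u v x) {k : ℕ} (hk : 2 ≤ k)
    (hkn : k ≤ n - 2) : Commute (toConjAct u ^ k • x) (v : M) := by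
  simpa [Nat.sub_sub_self (by omega : k ≤ n)] using commute_pow_sub_smul h.conjAct_pow_smul_v
    (h.commute_x_conj (n - k) (Or.inr ⟨by omega, by omega⟩)) (Nat.sub_le n k)

theorem semiconjBy_of_commute_conj (h : SatisfiesFiveGenRel n u v x) (hn : 3 ≤ n) {y : M}
    (hy : ∀ k, 2 ≤ k → k ≤ n - 2 → Commute y (toConjAct u ^ k • (v : M))) :
    SemiconjBy ((v : M) * toConjAct u • (v : M)) y (toConjAct u • y) := by
  refine semiconjBy_conjAct_of_eq_mul
    (congrArg Units.val (eq_mul_mul_ascProd_of_pow_eq h.pow_eq hn)) ?_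
  rw [← Units.coeHom_apply, map_ascProd]
  exact commute_ascProd fun i hi => (hy (i + 2) (by omega) (by omega)).symm

theorem isSingularBraidFamily (h : SatisfiesFiveGenRel n u v x) (hn : 3 ≤ n) :
    IsSingularBraidFamily (n - 1) (fun i => toConjAct u ^ i • (v : M))
      (fun i => toConjAct u ^ i • x) := by
  have hsmul : ∀ i (y : M), toConjAct u ^ i • toConjAct u • y = toConjAct u ^ (i + 1) • y :=
    fun i y => by rw [← mul_smul, ← pow_succ]
  have hbraid : ∀ i {y : M},
      SemiconjBy ((v : M) * toConjAct u • (v : M)) y (toConjAct u • y) →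
      toConjAct u ^ i • (v : M) * toConjAct u ^ (i + 1) • (v : M) * toConjAct u ^ i • y =
        toConjAct u ^ (i + 1) • y * toConjAct u ^ i • (v : M) *
          toConjAct u ^ (i + 1) • (v : M) := fun i y hy => by
    simpa [SemiconjBy, smul_mul', hsmul, mul_assoc] using hy.smul_distrib (toConjAct u ^ i)
  refine
    { commute := fun i j hij hj =>
        (h.commute_v_conj_of_le_sub_two (by omega) (by omega)).pow_smul_pow_smul (by omega)
      braid := fun i hi => hbraid i (h.semiconjBy_of_commute_conj hn fun k =>
        h.commute_v_conj_of_le_sub_two)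
      commute_xx := fun i j hij hj =>
        (h.commute_x_conj_x_of_le_sub_two (by omega) (by omega)).pow_smul_pow_smul (by omega)
      commute_xa := fun i j hi hj hij hji => ?_
      braid_x₁ := fun i hi => hbraid i (h.semiconjBy_of_commute_conj hn fun k hk hkn =>
        h.commute_x_conj k (.inr ⟨hk, hkn⟩))
      braid_x₂ := fun i hi => ?_ }
  · rcases le_or_gt i j with hle | hlt
    · exact (h.commute_x_conj (j - i) (by omega)).pow_smul_pow_smul hle
    · have := (h.commute_conj_x_v (k := i - j) (by omega) (by omega)).smul_distrib
        (toConjAct u ^ j)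
      rwa [← mul_smul, ← pow_add, Nat.add_sub_cancel' hlt.le] at this
  · simpa [smul_mul', hsmul, mul_assoc] using (congrArg (toConjAct u ^ i • ·) h.braid_x).symm

end SatisfiesFiveGenRel

end FiveGenRelations

section UnitBraidFamilies

variable {M : Type*} [Monoid M] {m n k : ℕ} {σ : ℕ → Mˣ} {x : ℕ → M}

theorem IsBraidFamily_s8.conjAct_ascProd_pow_smul (h : IsBraidFamily_s8 m (fun i => (σ i : M)))
    (hk : k < m) : toConjAct (ascProd σ m) ^ k • (σ 0 : M) = σ k := by
  rw [ConjAct.units_pow_smul_eq_iff, ← Units.coeHom_apply, map_ascProd]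
  simpa using SemiconjBy.pow_of_shift (a := fun i => (σ i : M)) (m := m) (i := 0) (k := k)
    (fun i hi => h.ascProd_semiconjBy hi) (by omega)

theorem IsSingularBraidFamily.conjAct_ascProd_pow_smul_x
    (h : IsSingularBraidFamily m (fun i => (σ i : M)) x) (hk : k < m) :
    toConjAct (ascProd σ m) ^ k • x 0 = x k := by
  rw [ConjAct.units_pow_smul_eq_iff, ← Units.coeHom_apply, map_ascProd]
  simpa using SemiconjBy.pow_of_shift (a := x) (m := m) (i := 0) (k := k)
    (fun i hi => h.ascProd_semiconjBy_x hi) (by omega)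

theorem IsSingularBraidFamily.satisfiesFiveGenRel
    (h : IsSingularBraidFamily (n - 1) (fun i => (σ i : M)) x) (hn : 3 ≤ n) :
    SatisfiesFiveGenRel n (ascProd σ (n - 1)) (σ 0) (x 0) := by
  have hσ := fun {k} => h.conjAct_ascProd_pow_smul (k := k)
  have hx := fun {k} => h.conjAct_ascProd_pow_smul_x (k := k)
  have hδ : ((ascProd σ (n - 1) : Mˣ) : M) = ascProd (fun i => (σ i : M)) (n - 1) := by
    rw [← Units.coeHom_apply, map_ascProd]; rfl
  refine
    { commute_conj := fun i hi hin => ?_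
      pow_eq := ?_
      commute_x_conj := fun i hi => ?_
      commute_x_conj_x := fun i hi hin => ?_
      commute_pow_x := ?_
      braid_x := ?_ }
  · rw [hσ (by omega)]
    exact h.commute 0 i hi (by omega)
  · ext
    simp only [Units.val_pow_eq_pow_val, Units.val_mul, hδ]
    obtain ⟨m, rfl⟩ : ∃ m, n = m + 2 := ⟨n - 2, by omega⟩
    exact h.ascProd_pow_eq
  · rcases hi with rfl | hi
    · simpa using h.commute_xa 0 0 (by omega) (by omega) (by omega) (by omega)
    · rw [hσ (by omega)]
      exact h.commute_xa 0 i (by omega) (by omega) (by omega) (by omega)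
  · rw [hx (by omega)]
    exact h.commute_xx 0 i hi (by omega)
  · rw [hδ, ← Nat.sub_add_cancel (by omega : 1 ≤ n)]
    exact (h.commute_x_ascProd_pow le_rfl).symm
  · have hσ₁ := hσ (k := 1) (by omega)
    have hx₁ := hx (k := 1) (by omega)
    rw [pow_one] at hσ₁ hx₁
    rw [hσ₁, hx₁]
    exact (h.braid_x₂ 0 (by omega)).symm

end UnitBraidFamilies

section Presentations

variable {M : Type*} [Monoid M]

theorem PresentedMonoid.freeMonoidLift_of_eq_of_rel {α : Type*}
    {rels : FreeMonoid α → FreeMonoid α → Prop} {a b : FreeMonoid α} (h : rels a b) :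
    FreeMonoid.lift (PresentedMonoid.of rels) a = FreeMonoid.lift (PresentedMonoid.of rels) b := by
  rw [show FreeMonoid.lift (PresentedMonoid.of rels) = PresentedMonoid.mk rels from
    FreeMonoid.hom_eq fun _ => rfl]
  exact PresentedMonoid.mk_eq_mk_of_rel h

def sbGenMap (n : ℕ) (σ : ℕ → Mˣ) (x : ℕ → M) : SBGen n → M
  | .sig i => σ i
  | .sinv i => ↑(σ i)⁻¹
  | .x i => x i

theorem sbGenMap_respects_sbRel_iff {n : ℕ} {σ : ℕ → Mˣ} {x : ℕ → M} :
    (∀ a b, sbRel n a b →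
        FreeMonoid.lift (sbGenMap n σ x) a = FreeMonoid.lift (sbGenMap n σ x) b) ↔
      IsSingularBraidFamily (n - 1) (fun i => (σ i : M)) x := by
  constructor
  · intro H
    refine
      { commute := fun i j hij hj => ?_
        braid := fun i hi => ?_
        commute_xx := fun i j hij hj => ?_
        commute_xa := fun i j hi hj hij hji => ?_
        braid_x₁ := fun i hi => ?_
        braid_x₂ := fun i hi => ?_ }
    · simpa [sbGenMap, Commute, SemiconjBy] using
        H _ _ (.comm_ss ⟨i, by omega⟩ ⟨j, hj⟩ (.inl (by simp; omega)))
    · simpa [sbGenMap] using H _ _ (.braid ⟨i, by omega⟩ ⟨i + 1, hi⟩ rfl)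
    · simpa [sbGenMap, Commute, SemiconjBy] using
        H _ _ (.comm_xx ⟨i, by omega⟩ ⟨j, hj⟩ (.inl (by simp; omega)))
    · simpa [sbGenMap, Commute, SemiconjBy] using
        H _ _ (.comm_xs ⟨i, hi⟩ ⟨j, hj⟩ ⟨hij, hji⟩)
    · simpa [sbGenMap] using H _ _ (.braid_x₁ ⟨i, by omega⟩ ⟨i + 1, hi⟩ rfl)
    · simpa [sbGenMap] using H _ _ (.braid_x₂ ⟨i, by omega⟩ ⟨i + 1, hi⟩ rfl)
  · intro h a b hab
    cases hab with
    | comm_ss i j hij =>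
      rcases hij with hij | hij
      · simpa [sbGenMap] using (h.commute i j (by omega) j.2).eq
      · simpa [sbGenMap] using (h.commute j i (by omega) i.2).eq.symm
    | comm_xx i j hij =>
      rcases hij with hij | hij
      · simpa [sbGenMap] using (h.commute_xx i j (by omega) j.2).eq
      · simpa [sbGenMap] using (h.commute_xx j i (by omega) i.2).eq.symm
    | comm_xs i j hij => simpa [sbGenMap] using (h.commute_xa i j i.2 j.2 hij.1 hij.2).eq
    | braid i j hij =>
      obtain ⟨j, hj⟩ := j; subst hij
      simpa [sbGenMap] using h.braid i hj
    | braid_x₁ i j hij =>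
      obtain ⟨j, hj⟩ := j; subst hij
      simpa [sbGenMap] using h.braid_x₁ i hj
    | braid_x₂ i j hij =>
      obtain ⟨j, hj⟩ := j; subst hij
      simpa [sbGenMap] using h.braid_x₂ i hj
    | inv_right i => simp [sbGenMap]
    | inv_left i => simp [sbGenMap]

def fiveGenMap (u v : Mˣ) (x : M) : FiveGen → M
  | .s1 => v
  | .s1i => ↑v⁻¹
  | .s => u
  | .si => ↑u⁻¹
  | .x1 => x

theorem fiveGenMap_respects_fiveGenRel_iff {n : ℕ} {u v : Mˣ} {x : M} :
    (∀ a b, fiveGenRel n a b →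
        FreeMonoid.lift (fiveGenMap u v x) a = FreeMonoid.lift (fiveGenMap u v x) b) ↔
      SatisfiesFiveGenRel n u v x := by
  constructor
  · intro H
    refine
      { commute_conj := fun i hi hin => ?_
        pow_eq := ?_
        commute_x_conj := fun i hi => ?_
        commute_x_conj_x := fun i hi hin => ?_
        commute_pow_x := ?_
        braid_x := ?_ }
    · simpa [fiveGenMap, Commute, SemiconjBy, ConjAct.units_pow_smul_def, mul_assoc]
        using H _ _ (.rel₁ i hi hin)
    · simpa [fiveGenMap, Units.ext_iff] using H _ _ .rel₂
    · simpa [fiveGenMap, Commute, SemiconjBy, ConjAct.units_pow_smul_def, mul_assoc]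
        using H _ _ (.rel₃ i hi)
    · simpa [fiveGenMap, Commute, SemiconjBy, ConjAct.units_pow_smul_def, mul_assoc]
        using H _ _ (.rel₄ i hi hin)
    · simpa [fiveGenMap, Commute, SemiconjBy] using H _ _ .rel₅
    · simpa [fiveGenMap, ConjAct.units_smul_def, mul_assoc] using H _ _ .rel₆
  · intro h a b hab
    cases hab with
    | rel₁ i h₁ h₂ =>
      simpa [fiveGenMap, Commute, SemiconjBy, ConjAct.units_pow_smul_def, mul_assoc]
        using h.commute_conj i h₁ h₂
    | rel₂ => simpa [fiveGenMap, Units.ext_iff] using h.pow_eq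
    | rel₃ i hi =>
      simpa [fiveGenMap, Commute, SemiconjBy, ConjAct.units_pow_smul_def, mul_assoc]
        using h.commute_x_conj i hi
    | rel₄ i h₁ h₂ =>
      simpa [fiveGenMap, Commute, SemiconjBy, ConjAct.units_pow_smul_def, mul_assoc]
        using h.commute_x_conj_x i h₁ h₂
    | rel₅ => simpa [fiveGenMap, Commute, SemiconjBy] using h.commute_pow_x.eq
    | rel₆ => simpa [fiveGenMap, ConjAct.units_smul_def, mul_assoc] using h.braid_x
    | inv₁ | inv₂ | inv₃ | inv₄ => simp [fiveGenMap]

end Presentations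

namespace SingBraidMonoid

variable (n : ℕ) {M : Type*} [Monoid M]

/-- Out-of-range indices give `1` (also in `xGen`). -/
def sigmaGen (i : ℕ) : (SingBraidMonoid n)ˣ :=
  if h : i < n - 1 then
    { val := PresentedMonoid.of (sbRel n) (.sig ⟨i, h⟩)
      inv := PresentedMonoid.of (sbRel n) (.sinv ⟨i, h⟩)
      val_inv := PresentedMonoid.mk_eq_mk_of_rel (sbRel.inv_right ⟨i, h⟩)
      inv_val := PresentedMonoid.mk_eq_mk_of_rel (sbRel.inv_left ⟨i, h⟩) }
  else 1

def xGen (i : ℕ) : SingBraidMonoid n :=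
  if h : i < n - 1 then PresentedMonoid.of (sbRel n) (.x ⟨i, h⟩) else 1

variable {n}

theorem coe_sigmaGen {i : ℕ} (h : i < n - 1) :
    (sigmaGen n i : SingBraidMonoid n) = PresentedMonoid.of (sbRel n) (.sig ⟨i, h⟩) := by
  rw [sigmaGen, dif_pos h]

theorem coe_inv_sigmaGen {i : ℕ} (h : i < n - 1) :
    (((sigmaGen n i)⁻¹ : (SingBraidMonoid n)ˣ) : SingBraidMonoid n) =
      PresentedMonoid.of (sbRel n) (.sinv ⟨i, h⟩) := by
  rw [sigmaGen, dif_pos h]; rfl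

theorem xGen_of_lt {i : ℕ} (h : i < n - 1) :
    xGen n i = PresentedMonoid.of (sbRel n) (.x ⟨i, h⟩) := dif_pos h

theorem sbGenMap_sigmaGen_xGen :
    sbGenMap n (sigmaGen n) (xGen n) = PresentedMonoid.of (sbRel n) := by
  funext g
  cases g with
  | sig i => exact coe_sigmaGen i.2
  | sinv i => exact coe_inv_sigmaGen i.2
  | x i => exact xGen_of_lt i.2

variable (n)

theorem isSingularBraidFamily_generators :
    IsSingularBraidFamily (n - 1) (fun i => (sigmaGen n i : SingBraidMonoid n)) (xGen n) :=
  sbGenMap_respects_sbRel_iff.1 <| by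
    rw [sbGenMap_sigmaGen_xGen]
    exact fun _ _ => PresentedMonoid.freeMonoidLift_of_eq_of_rel

variable {n} {σ : ℕ → Mˣ} {x : ℕ → M}

def lift (h : IsSingularBraidFamily (n - 1) (fun i => (σ i : M)) x) : SingBraidMonoid n →* M :=
  PresentedMonoid.lift (sbGenMap n σ x) (sbGenMap_respects_sbRel_iff.2 h)

theorem map_lift_sigmaGen (h : IsSingularBraidFamily (n - 1) (fun i => (σ i : M)) x) {i : ℕ}
    (hi : i < n - 1) : Units.map (lift h) (sigmaGen n i) = σ i :=
  Units.ext <| by rw [Units.coe_map, coe_sigmaGen hi]; rfl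

theorem lift_xGen (h : IsSingularBraidFamily (n - 1) (fun i => (σ i : M)) x) {i : ℕ}
    (hi : i < n - 1) : lift h (xGen n i) = x i := by
  rw [xGen_of_lt hi]; rfl

theorem coe_ascProd_sigmaGen :
    ((ascProd (sigmaGen n) (n - 1) : (SingBraidMonoid n)ˣ) : SingBraidMonoid n) =
    (List.ofFn fun i : Fin (n - 1) => PresentedMonoid.of (sbRel n) (SBGen.sig i)).prod := by
  rw [← Units.coeHom_apply, map_ascProd, ascProd, List.ofFn_eq_map,
    ← List.map_coe_finRange_eq_range, List.map_map]
  exact congrArg List.prod (List.map_congr_left fun i _ => coe_sigmaGen i.2)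

end SingBraidMonoid

namespace fiveGenRel

variable (n : ℕ) {M : Type*} [Monoid M]

def sigmaUnit : (PresentedMonoid (fiveGenRel n))ˣ where
  val := PresentedMonoid.of _ .s
  inv := PresentedMonoid.of _ .si
  val_inv := PresentedMonoid.mk_eq_mk_of_rel .inv₃
  inv_val := PresentedMonoid.mk_eq_mk_of_rel .inv₄

def sigma₁Unit : (PresentedMonoid (fiveGenRel n))ˣ where
  val := PresentedMonoid.of _ .s1
  inv := PresentedMonoid.of _ .s1i
  val_inv := PresentedMonoid.mk_eq_mk_of_rel .inv₁
  inv_val := PresentedMonoid.mk_eq_mk_of_rel .inv₂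

theorem satisfiesFiveGenRel_generators :
    SatisfiesFiveGenRel n (sigmaUnit n) (sigma₁Unit n) (PresentedMonoid.of _ .x1) :=
  fiveGenMap_respects_fiveGenRel_iff.1 <| by
    rw [show fiveGenMap (sigmaUnit n) (sigma₁Unit n) (PresentedMonoid.of _ .x1) =
      PresentedMonoid.of (fiveGenRel n) by funext g; cases g <;> rfl]
    exact fun _ _ => PresentedMonoid.freeMonoidLift_of_eq_of_rel

variable {n} {u v : Mˣ} {x : M}

def lift (h : SatisfiesFiveGenRel n u v x) : PresentedMonoid (fiveGenRel n) →* M :=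
  PresentedMonoid.lift (fiveGenMap u v x) (fiveGenMap_respects_fiveGenRel_iff.2 h)

theorem map_lift_sigmaUnit (h : SatisfiesFiveGenRel n u v x) :
    Units.map (lift h) (sigmaUnit n) = u := Units.ext rfl

theorem map_lift_sigma₁Unit (h : SatisfiesFiveGenRel n u v x) :
    Units.map (lift h) (sigma₁Unit n) = v := Units.ext rfl

end fiveGenRel

namespace SingBraidMonoid

open fiveGenRel

variable {n : ℕ} (hn : 3 ≤ n)

def toFiveGen : SingBraidMonoid n →* PresentedMonoid (fiveGenRel n) :=
  lift (σ := fun i => toConjAct (sigmaUnit n) ^ i • sigma₁Unit n)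
    ((satisfiesFiveGenRel_generators n).isSingularBraidFamily hn)

def ofFiveGen : PresentedMonoid (fiveGenRel n) →* SingBraidMonoid n :=
  fiveGenRel.lift ((isSingularBraidFamily_generators n).satisfiesFiveGenRel hn)

theorem toFiveGen_comp_ofFiveGen : (toFiveGen hn).comp (ofFiveGen hn) = MonoidHom.id _ := by
  have hσ : ∀ i < n - 1, Units.map (toFiveGen hn) (sigmaGen n i) =
      toConjAct (sigmaUnit n) ^ i • sigma₁Unit n := fun i hi => map_lift_sigmaGen _ hi
  have hδ : Units.map (toFiveGen hn) (ascProd (sigmaGen n) (n - 1)) = sigmaUnit n := by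
    rw [map_ascProd, ascProd_congr hσ,
      ascProd_conj_eq_of_pow_eq (satisfiesFiveGenRel_generators n).pow_eq (by omega)]
  have hx : toFiveGen hn (xGen n 0) = toConjAct (sigmaUnit n) ^ 0 • PresentedMonoid.of _ .x1 :=
    lift_xGen _ (by omega)
  have hσ₀ := hσ 0 (by omega)
  rw [pow_zero, one_smul] at hσ₀ hx
  apply PresentedMonoid.ext
  intro g
  cases g with
  | s1 => exact congrArg Units.val hσ₀
  | s1i => exact congrArg (fun w => ((w⁻¹ : _ˣ) : PresentedMonoid (fiveGenRel n))) hσ₀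
  | s => exact congrArg Units.val hδ
  | si => exact congrArg (fun w => ((w⁻¹ : _ˣ) : PresentedMonoid (fiveGenRel n))) hδ
  | x1 => exact hx

theorem ofFiveGen_comp_toFiveGen : (ofFiveGen hn).comp (toFiveGen hn) = MonoidHom.id _ := by
  have hfam := isSingularBraidFamily_generators n
  have hu : Units.map (ofFiveGen hn) (sigmaUnit n) = ascProd (sigmaGen n) (n - 1) :=
    map_lift_sigmaUnit _
  have hv : Units.map (ofFiveGen hn) (sigma₁Unit n) = sigmaGen n 0 := map_lift_sigma₁Unit _
  have hσ : ∀ i < n - 1,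
      Units.map (ofFiveGen hn) (toConjAct (sigmaUnit n) ^ i • sigma₁Unit n) = sigmaGen n i :=
    fun i hi => Units.ext <| by
      rw [Units.coe_map]
      show ofFiveGen hn (toConjAct (sigmaUnit n) ^ i • ((sigma₁Unit n : _ˣ) : _)) = _
      rw [ConjAct.map_units_pow_smul, hu, ← Units.coe_map, hv,
        hfam.conjAct_ascProd_pow_smul hi]
  have hx : ∀ i < n - 1,
      ofFiveGen hn (toConjAct (sigmaUnit n) ^ i • PresentedMonoid.of _ .x1) = xGen n i :=
    fun i hi => by
      rw [ConjAct.map_units_pow_smul, hu]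
      exact hfam.conjAct_ascProd_pow_smul_x hi
  apply PresentedMonoid.ext
  intro g
  cases g with
  | sig i => exact (congrArg Units.val (hσ i i.2)).trans (coe_sigmaGen i.2)
  | sinv i =>
    exact (congrArg (fun w => ((w⁻¹ : _ˣ) : SingBraidMonoid n)) (hσ i i.2)).trans
      (coe_inv_sigmaGen i.2)
  | x i => exact (hx i i.2).trans (xGen_of_lt i.2)

end SingBraidMonoid

theorem singular_braid_five_generator_presentation (n : ℕ) (hn : 3 ≤ n) :
    ∃ e : PresentedMonoid (fiveGenRel n) ≃* SingBraidMonoid n,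
      e (PresentedMonoid.of (fiveGenRel n) FiveGen.s1) =
        PresentedMonoid.of (sbRel n) (SBGen.sig ⟨0, by omega⟩) ∧
      e (PresentedMonoid.of (fiveGenRel n) FiveGen.x1) =
        PresentedMonoid.of (sbRel n) (SBGen.x ⟨0, by omega⟩) ∧
      e (PresentedMonoid.of (fiveGenRel n) FiveGen.s) =
        (List.ofFn (fun i : Fin (n - 1) =>
          PresentedMonoid.of (sbRel n) (SBGen.sig i))).prod :=
  ⟨MonoidHom.toMulEquiv _ _ (SingBraidMonoid.toFiveGen_comp_ofFiveGen hn)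
      (SingBraidMonoid.ofFiveGen_comp_toFiveGen hn),
    SingBraidMonoid.coe_sigmaGen _, SingBraidMonoid.xGen_of_lt _,
    SingBraidMonoid.coe_ascProd_sigmaGen⟩
end
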